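/- arXiv:2404.18847 — 6 statements merged into one kernel-verified Lean document; each statement's English description precedes it below -/
import Mathlib

section
/- For any finite set of unit vectors {ψ_i}_{i=1}^N in C^d and any natural number t ≥ 1, the frame potential satisfies (1/N²) ∑_{i,j} |⟨ψ_i,ψ_j⟩|^{2t} ≥ 1 / C(d+t-1, t). -/
open scoped ComplexOrder

noncomputable def wPhi (d t : ℕ) (x : EuclideanSpace ℂ (Fin d)) (k : Fin d → ℕ) : ℂ :=
  (Real.sqrt (Nat.multinomial Finset.univ k) : ℂ) * ∏ j, (x j) ^ (k j)

lemma wSqrt_mul (m : ℕ) :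
    ((Real.sqrt m : ℝ) : ℂ) * ((Real.sqrt m : ℝ) : ℂ) = (m : ℂ) := by
  rw [← Complex.ofReal_mul, Real.mul_self_sqrt (Nat.cast_nonneg m)]
  norm_cast

lemma welch_inner_pow (d t : ℕ) (x y : EuclideanSpace ℂ (Fin d)) :
    (inner ℂ x y : ℂ) ^ t =
      ∑ k ∈ Finset.piAntidiag (Finset.univ : Finset (Fin d)) t,
        (starRingEnd ℂ) (wPhi d t x k) * wPhi d t y k := by
  have hinner : (inner ℂ x y : ℂ) = ∑ j, (starRingEnd ℂ) (x j) * y j := by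
    simp [PiLp.inner_apply, RCLike.inner_apply, mul_comm]
  rw [hinner, Finset.sum_pow_eq_sum_piAntidiag]
  refine Finset.sum_congr rfl fun k hk => ?_
  simp only [wPhi, map_mul, map_prod, map_pow, Complex.conj_ofReal, mul_pow,
    Finset.prod_mul_distrib]
  rw [show ((Nat.multinomial Finset.univ k : ℕ) : ℂ) =
      ((Real.sqrt (Nat.multinomial Finset.univ k) : ℝ) : ℂ) *
      ((Real.sqrt (Nat.multinomial Finset.univ k) : ℝ) : ℂ) from (wSqrt_mul _).symm]
  ring

lemma welch_normSq_sum (d t : ℕ) (x : EuclideanSpace ℂ (Fin d)) :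
    ∑ k ∈ Finset.piAntidiag (Finset.univ : Finset (Fin d)) t,
        Complex.normSq (wPhi d t x k) = (∑ j, Complex.normSq (x j)) ^ t := by
  rw [Finset.sum_pow_eq_sum_piAntidiag]
  refine Finset.sum_congr rfl fun k hk => ?_
  simp only [wPhi, map_mul, map_prod, map_pow, Complex.normSq_ofReal]
  rw [Real.mul_self_sqrt (Nat.cast_nonneg _)]

lemma welch_card_piAntidiag (d t : ℕ) :
    (Finset.piAntidiag (Finset.univ : Finset (Fin d)) t).card = (d + t - 1).choose t := by
  classical
  rw [← Finset.map_sym_eq_piAntidiag, Finset.card_map]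
  have h : (Finset.univ : Finset (Fin d)).sym t = Finset.univ := by
    ext m; simp [Finset.mem_sym_iff]
  rw [h, Finset.card_univ, Sym.card_sym_eq_multichoose, Fintype.card_fin, Nat.multichoose_eq]

lemma welch_sum4_swap {β : Type*} [Fintype β] {α : Type*} (s : Finset α)
    (f : β → β → α → α → ℂ) :
    ∑ i : β, ∑ j : β, ∑ k ∈ s, ∑ l ∈ s, f i j k l =
      ∑ k ∈ s, ∑ l ∈ s, ∑ i : β, ∑ j : β, f i j k l := by
  calc ∑ i : β, ∑ j : β, ∑ k ∈ s, ∑ l ∈ s, f i j k l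
      = ∑ i : β, ∑ k ∈ s, ∑ j : β, ∑ l ∈ s, f i j k l :=
        Finset.sum_congr rfl fun _ _ => Finset.sum_comm
    _ = ∑ k ∈ s, ∑ i : β, ∑ j : β, ∑ l ∈ s, f i j k l := Finset.sum_comm
    _ = ∑ k ∈ s, ∑ i : β, ∑ l ∈ s, ∑ j : β, f i j k l :=
        Finset.sum_congr rfl fun _ _ => Finset.sum_congr rfl fun _ _ => Finset.sum_comm
    _ = ∑ k ∈ s, ∑ l ∈ s, ∑ i : β, ∑ j : β, f i j k l :=
        Finset.sum_congr rfl fun _ _ => Finset.sum_comm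

lemma welch_total (d t N : ℕ) (ψ : Fin N → EuclideanSpace ℂ (Fin d)) :
    ∑ i : Fin N, ∑ j : Fin N, ‖(inner ℂ (ψ i) (ψ j) : ℂ)‖ ^ (2 * t) =
      ∑ k ∈ Finset.piAntidiag (Finset.univ : Finset (Fin d)) t,
        ∑ l ∈ Finset.piAntidiag (Finset.univ : Finset (Fin d)) t,
          Complex.normSq (∑ i : Fin N,
            wPhi d t (ψ i) k * (starRingEnd ℂ) (wPhi d t (ψ i) l)) := by
  set S := Finset.piAntidiag (Finset.univ : Finset (Fin d)) t with hS
  set φ : Fin N → (Fin d → ℕ) → ℂ := fun i => wPhi d t (ψ i) with hφ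
  have habs : ∀ i j, ‖(inner ℂ (ψ i) (ψ j) : ℂ)‖ ^ (2 * t)
      = ((∑ k ∈ S, (starRingEnd ℂ) (φ i k) * φ j k) *
         (starRingEnd ℂ) (∑ l ∈ S, (starRingEnd ℂ) (φ i l) * φ j l)).re := by
    intro i j
    have h1 : ‖(inner ℂ (ψ i) (ψ j) : ℂ)‖ ^ (2 * t)
        = Complex.normSq ((inner ℂ (ψ i) (ψ j) : ℂ) ^ t) := by
      rw [Complex.normSq_eq_norm_sq, norm_pow, ← pow_mul, mul_comm]
    rw [h1, welch_inner_pow d t (ψ i) (ψ j)]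
    rw [show ((∑ k ∈ S, (starRingEnd ℂ) (φ i k) * φ j k) *
         (starRingEnd ℂ) (∑ l ∈ S, (starRingEnd ℂ) (φ i l) * φ j l))
        = ((Complex.normSq (∑ k ∈ S, (starRingEnd ℂ) (φ i k) * φ j k) : ℝ) : ℂ) from
      Complex.mul_conj _]
    rw [Complex.ofReal_re]
  have hmain : ∑ i : Fin N, ∑ j : Fin N,
      ((∑ k ∈ S, (starRingEnd ℂ) (φ i k) * φ j k) *
       (starRingEnd ℂ) (∑ l ∈ S, (starRingEnd ℂ) (φ i l) * φ j l))
      = ∑ k ∈ S, ∑ l ∈ S,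
          ((starRingEnd ℂ) (∑ i : Fin N, φ i k * (starRingEnd ℂ) (φ i l))) *
          (∑ i : Fin N, φ i k * (starRingEnd ℂ) (φ i l)) := by
    simp only [map_sum, map_mul, Complex.conj_conj]
    simp_rw [Finset.sum_mul_sum]
    rw [welch_sum4_swap]
    exact Finset.sum_congr rfl fun k _ => Finset.sum_congr rfl fun l _ =>
      Finset.sum_congr rfl fun i _ => Finset.sum_congr rfl fun j _ => by ring
  simp_rw [habs]
  simp only [← Complex.re_sum]
  rw [hmain]
  simp only [Complex.re_sum]
  exact Finset.sum_congr rfl fun k _ => Finset.sum_congr rfl fun l _ => by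
    rw [mul_comm, Complex.mul_conj, Complex.ofReal_re]


set_option maxHeartbeats 1000000 in
/-- Welch bound. For any finite set of unit vectors `ψ i` in `ℂ^d` and
any `t ≥ 1`, the frame potential satisfies
`(1/N²) ∑_{i,j} |⟨ψ_i, ψ_j⟩|^{2t} ≥ 1 / C(d+t-1, t)`. -/
theorem welch_bound (d t N : ℕ) (ht : 1 ≤ t) (hN : 0 < N)
    (ψ : Fin N → EuclideanSpace ℂ (Fin d)) (hψ : ∀ i, ‖ψ i‖ = 1) :
    1 / ((Nat.choose (d + t - 1) t : ℝ)) ≤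
      (1 / (N : ℝ) ^ 2) *
        ∑ i : Fin N, ∑ j : Fin N, ‖(inner ℂ (ψ i) (ψ j) : ℂ)‖ ^ (2 * t) := by
  classical
  rcases Nat.eq_zero_or_pos d with hd | hd
  · subst hd
    have h0 := hψ ⟨0, hN⟩
    rw [EuclideanSpace.norm_eq] at h0
    simp at h0
  set S := Finset.piAntidiag (Finset.univ : Finset (Fin d)) t with hS
  have hcard : S.card = (d + t - 1).choose t := welch_card_piAntidiag d t
  have hcpos : 0 < (d + t - 1).choose t := Nat.choose_pos (by omega)
  set T := ∑ i : Fin N, ∑ j : Fin N, ‖(inner ℂ (ψ i) (ψ j) : ℂ)‖ ^ (2 * t) with hT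
  have hTeq : T = ∑ k ∈ S, ∑ l ∈ S, Complex.normSq (∑ i : Fin N,
      wPhi d t (ψ i) k * (starRingEnd ℂ) (wPhi d t (ψ i) l)) := welch_total d t N ψ
  have hnorm : ∀ i, ∑ j, Complex.normSq (ψ i j) = 1 := by
    intro i
    have h1 := hψ i
    rw [EuclideanSpace.norm_eq] at h1
    have hnn : 0 ≤ ∑ j, ‖ψ i j‖ ^ 2 := by positivity
    have h2 : ∑ j, ‖ψ i j‖ ^ 2 = 1 := by
      rw [← Real.sq_sqrt hnn, h1]; norm_num
    simpa [Complex.normSq_eq_norm_sq] using h2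
  have hdiag : ∀ k, Complex.normSq (∑ i : Fin N,
      wPhi d t (ψ i) k * (starRingEnd ℂ) (wPhi d t (ψ i) k))
      = (∑ i : Fin N, Complex.normSq (wPhi d t (ψ i) k)) ^ 2 := by
    intro k
    have h3 : (∑ i : Fin N, wPhi d t (ψ i) k * (starRingEnd ℂ) (wPhi d t (ψ i) k))
        = ((∑ i : Fin N, Complex.normSq (wPhi d t (ψ i) k) : ℝ) : ℂ) := by
      push_cast
      exact Finset.sum_congr rfl fun i _ => Complex.mul_conj _
    rw [h3, Complex.normSq_ofReal, sq]
  have htrace : ∑ k ∈ S, (∑ i : Fin N, Complex.normSq (wPhi d t (ψ i) k)) = N := by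
    rw [Finset.sum_comm]
    have h1 : ∀ i : Fin N, ∑ k ∈ S, Complex.normSq (wPhi d t (ψ i) k) = 1 := by
      intro i
      rw [hS, welch_normSq_sum, hnorm i, one_pow]
    rw [Finset.sum_congr rfl fun i _ => h1 i]
    simp
  have hCS : (N : ℝ) ^ 2 ≤ ((d + t - 1).choose t : ℝ) * T := by
    have h2 : (∑ k ∈ S, (∑ i : Fin N, Complex.normSq (wPhi d t (ψ i) k))) ^ 2
        ≤ S.card * ∑ k ∈ S, (∑ i : Fin N, Complex.normSq (wPhi d t (ψ i) k)) ^ 2 :=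
      sq_sum_le_card_mul_sum_sq
    have h3 : ∑ k ∈ S, (∑ i : Fin N, Complex.normSq (wPhi d t (ψ i) k)) ^ 2 ≤ T := by
      rw [hTeq]
      refine Finset.sum_le_sum fun k hk => ?_
      calc (∑ i : Fin N, Complex.normSq (wPhi d t (ψ i) k)) ^ 2
          = Complex.normSq (∑ i : Fin N,
              wPhi d t (ψ i) k * (starRingEnd ℂ) (wPhi d t (ψ i) k)) := (hdiag k).symm
        _ ≤ ∑ l ∈ S, Complex.normSq (∑ i : Fin N,
              wPhi d t (ψ i) k * (starRingEnd ℂ) (wPhi d t (ψ i) l)) :=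
            Finset.single_le_sum (f := fun l => Complex.normSq (∑ i : Fin N,
              wPhi d t (ψ i) k * (starRingEnd ℂ) (wPhi d t (ψ i) l)))
              (fun l _ => Complex.normSq_nonneg _) hk
    calc (N : ℝ) ^ 2
        = (∑ k ∈ S, (∑ i : Fin N, Complex.normSq (wPhi d t (ψ i) k))) ^ 2 := by rw [htrace]
      _ ≤ S.card * ∑ k ∈ S, (∑ i : Fin N, Complex.normSq (wPhi d t (ψ i) k)) ^ 2 := h2
      _ ≤ S.card * T := by
          exact mul_le_mul_of_nonneg_left h3 (by positivity)
      _ = ((d + t - 1).choose t : ℝ) * T := by rw [hcard]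
  have hN2 : (0 : ℝ) < (N : ℝ) ^ 2 := by positivity
  have hc : (0 : ℝ) < ((d + t - 1).choose t : ℝ) := by exact_mod_cast hcpos
  rw [show (1 / (N : ℝ) ^ 2) * T = T / (N : ℝ) ^ 2 by ring, div_le_div_iff₀ hc hN2]
  nlinarith [hCS]
end

section
/- Let H be a complex Hadamard matrix of order d (H H† = d·I, |H_{αβ}| = 1), let 𝔇 = diag(H_{11},…,H_{dd}) be the diagonal matrix with 𝔇_{αα} = H_{αα}, and let a, b ≥ 0 with a² + b² = 1. Suppose every 2×2 principal submatrix (H_{αα}, H_{αβ}; H_{βα}, H_{ββ}) satisfies the Hadamard orthogonality condition H_{αα}·conj(H_{βα}) + H_{αβ}·conj(H_{ββ}) = 0 for all α ≠ β. Then V := √a·𝔇 + √b·(H − 𝔇) satisfies V V† = (a + (d−1) b)·I. -/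
open Matrix
open scoped ComplexConjugate

/-- if `H` is a complex Hadamard matrix of order `d` (`H Hᴴ = d·I`,
`|H_{αβ}| = 1`) that is robust, i.e. every 2×2 principal submatrix satisfies the
Hadamard orthogonality condition `H_{αα}·conj(H_{βα}) + H_{αβ}·conj(H_{ββ}) = 0`
for `α ≠ β`, then for `a, b ≥ 0` with `a² + b² = 1` the matrix
`V = √a·𝔇 + √b·(H − 𝔇)` with `𝔇 = diag(H_{11},…,H_{dd})` satisfies
`V Vᴴ = (a + (d−1)b)·I`. -/
theorem robust_hadamard_combination_unitary (d : ℕ)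
    (H : Matrix (Fin d) (Fin d) ℂ)
    (hHad : H * Hᴴ = (d : ℂ) • (1 : Matrix (Fin d) (Fin d) ℂ))
    (hmod : ∀ α β, ‖H α β‖ = 1)
    (hrobust : ∀ α β, α ≠ β → H α α * conj (H β α) + H α β * conj (H β β) = 0)
    (a b : ℝ) (ha : 0 ≤ a) (hb : 0 ≤ b) (hab : a ^ 2 + b ^ 2 = 1) :
    (let 𝔇 : Matrix (Fin d) (Fin d) ℂ := Matrix.diagonal (fun α => H α α)
     let V : Matrix (Fin d) (Fin d) ℂ :=
       (Real.sqrt a : ℂ) • 𝔇 + (Real.sqrt b : ℂ) • (H - 𝔇)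
     V * Vᴴ = ((a + ((d : ℝ) - 1) * b : ℝ) : ℂ) • (1 : Matrix (Fin d) (Fin d) ℂ)) := by
  intro 𝔇 V
  set s : ℂ := ((Real.sqrt a : ℝ) : ℂ) with hsdef
  set t : ℂ := ((Real.sqrt b : ℝ) : ℂ) with htdef
  have cmul : ∀ x y : ℂ, conj (x * y) = conj x * conj y := fun x y =>
    map_mul (starRingEnd ℂ) x y
  have hss : s * s = (a : ℂ) := by
    rw [hsdef]; norm_cast; exact Real.mul_self_sqrt ha
  have htt : t * t = (b : ℂ) := by
    rw [htdef]; norm_cast; exact Real.mul_self_sqrt hb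
  have hconjs : conj s = s := by rw [hsdef]; exact Complex.conj_ofReal _
  have hconjt : conj t = t := by rw [htdef]; exact Complex.conj_ofReal _
  have hnorm : ∀ α β, H α β * conj (H α β) = 1 := by
    intro α β
    rw [Complex.mul_conj, Complex.normSq_eq_norm_sq, hmod]
    norm_num
  have hkey : ∀ α β : Fin d,
      (∑ γ, H α γ * conj (H β γ)) = if α = β then (d : ℂ) else 0 := by
    intro α β
    have := congrFun (congrFun hHad α) β
    simp only [mul_apply, conjTranspose_apply, Matrix.smul_apply, Matrix.one_apply,
      smul_eq_mul, ← starRingEnd_apply] at this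
    rw [this]
    split <;> simp
  have hVdef : ∀ α γ : Fin d,
      V α γ = if γ = α then s * H α α else t * H α γ := by
    intro α γ
    by_cases h : γ = α
    · subst h
      simp [V, 𝔇, Matrix.add_apply, Matrix.smul_apply, Matrix.sub_apply,
        Matrix.diagonal_apply_eq, hsdef]
    · simp [V, 𝔇, Matrix.add_apply, Matrix.smul_apply, Matrix.sub_apply,
        Matrix.diagonal_apply_ne' _ h, h, htdef]
  ext α β
  rw [mul_apply]
  simp only [conjTranspose_apply, Matrix.smul_apply, smul_eq_mul, ← starRingEnd_apply]
  by_cases hab' : α = β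
  · subst hab'
    rw [Matrix.one_apply_eq, mul_one,
      ← Finset.add_sum_erase _ _ (Finset.mem_univ α)]
    have h1 : V α α * conj (V α α) = (a : ℂ) := by
      rw [hVdef, if_pos rfl, cmul, hconjs,
        show s * H α α * (s * conj (H α α)) = (s * s) * (H α α * conj (H α α)) from by ring,
        hnorm, hss, mul_one]
    have h2 : ∀ γ ∈ Finset.univ.erase α, V α γ * conj (V α γ) = (b : ℂ) := by
      intro γ hγ
      have hγα : γ ≠ α := (Finset.mem_erase.mp hγ).1
      rw [hVdef, if_neg hγα, cmul, hconjt,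
        show t * H α γ * (t * conj (H α γ)) = (t * t) * (H α γ * conj (H α γ)) from by ring,
        hnorm, htt, mul_one]
    rw [h1, Finset.sum_congr rfl h2, Finset.sum_const,
      Finset.card_erase_of_mem (Finset.mem_univ α), Finset.card_univ, Fintype.card_fin]
    have hd : 1 ≤ d := α.pos
    rw [nsmul_eq_mul]
    push_cast [Nat.cast_sub hd]
    ring
  · rw [Matrix.one_apply_ne hab', mul_zero]
    have hterm : ∀ γ : Fin d, V α γ * conj (V β γ) =
        t * t * (H α γ * conj (H β γ)) +
        (s * t - t * t) * ((if γ = α then H α α * conj (H β α) else 0) +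
          (if γ = β then H α β * conj (H β β) else 0)) := by
      intro γ
      by_cases h1 : γ = α
      · have h2 : γ ≠ β := fun h => hab' ((h1.symm.trans h))
        rw [hVdef α γ, hVdef β γ, if_pos h1, if_neg h2, if_pos h1, if_neg h2]
        subst h1
        rw [cmul, hconjt]
        ring
      · by_cases h2 : γ = β
        · rw [hVdef α γ, hVdef β γ, if_neg h1, if_pos h2, if_neg h1, if_pos h2]
          subst h2
          rw [cmul, hconjs]
          ring
        · rw [hVdef α γ, hVdef β γ, if_neg h1, if_neg h2, if_neg h1, if_neg h2]
          rw [cmul, hconjt]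
          ring
    rw [Finset.sum_congr rfl (fun γ _ => hterm γ), Finset.sum_add_distrib,
      ← Finset.mul_sum, ← Finset.mul_sum, hkey, if_neg hab', mul_zero, zero_add,
      Finset.sum_add_distrib]
    simp only [Finset.sum_ite_eq', Finset.mem_univ, if_pos]
    rw [hrobust α β hab', mul_zero]
end

section
/- Let d ≥ 2. The vectors |ψ⟩ = (cos(θ/2), sin(θ/2)) and |ψ⊥⟩ = (sin(θ/2), −cos(θ/2)) in C², together with the diagonal unitary U = diag(1, e^{iγ}) with γ = 2π/(k+1), generate the set of 2(k+1) vectors U^j|ψ⟩, U^j|ψ⊥⟩ for j = 0,…,k. If sin²θ = 2/3 and k ≥ 2, then this set saturates the Welch bound for t = 3, i.e., ∑ over all pairs of vectors of |⟨·,·⟩|^6 equals [2(k+1)]² / C(4,3) = (2(k+1))²/4. -/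
open Matrix Complex Finset
open scoped ComplexConjugate

lemma geom_exp_sum (n : ℕ) (t : ℝ) (h1 : Complex.exp (t * Complex.I) ≠ 1)
    (h2 : Complex.exp (t * Complex.I) ^ n = 1) :
    ∑ j : Fin n, Complex.exp ((j : ℕ) * t * Complex.I) = 0 := by
  have h : ∑ j : Fin n, Complex.exp (t*I) ^ (j:ℕ) = 0 := by
    rw [Fin.sum_univ_eq_sum_range fun j => Complex.exp (t*I) ^ j, geom_sum_eq h1, h2]
    simp
  rw [← h]
  refine Finset.sum_congr rfl fun j _ => ?_
  rw [← Complex.exp_nat_mul]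
  ring_nf

lemma cos_sin_sum (n : ℕ) (t : ℝ) (h1 : Complex.exp (t * Complex.I) ≠ 1)
    (h2 : Complex.exp (t * Complex.I) ^ n = 1) :
    (∑ j : Fin n, Real.cos ((j : ℕ) * t)) = 0 ∧ (∑ j : Fin n, Real.sin ((j : ℕ) * t)) = 0 := by
  have h := geom_exp_sum n t h1 h2
  have hre : ∀ j : Fin n, Complex.exp ((j : ℕ) * t * Complex.I)
      = (Real.cos ((j:ℕ)*t) : ℂ) + (Real.sin ((j:ℕ)*t) : ℂ) * I := by
    intro j
    rw [show ((j : ℕ) : ℂ) * (t:ℂ) * I = (((j:ℕ)*t : ℝ) : ℂ) * I by push_cast; ring,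
      Complex.exp_mul_I, Complex.ofReal_cos, Complex.ofReal_sin]
  simp only [hre] at h
  rw [Finset.sum_add_distrib, ← Finset.sum_mul, ← Complex.ofReal_sum, ← Complex.ofReal_sum] at h
  rw [Complex.ext_iff] at h
  simp only [Complex.add_re, Complex.ofReal_re, Complex.mul_re, Complex.I_re, Complex.I_im,
    Complex.ofReal_im, Complex.add_im, Complex.mul_im, Complex.zero_re, Complex.zero_im] at h
  constructor <;> linarith [h.1, h.2]

lemma key_id (c s X Y : ℝ) (h1 : c^2+s^2 = 1) (h2 : 4*c^2*s^2 = 2/3) (h3 : X^2+Y^2 = 1) :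
    ((c^2+s^2*X)^2 + (s^2*Y)^2)^3 + (c^2*s^2*((1-X)^2+Y^2))^3
      + (c^2*s^2*((1-X)^2+Y^2))^3 + ((s^2+c^2*X)^2+(c^2*Y)^2)^3
      = 2/3*(1+X+X^2) := by
  have hP : c^2*s^2 = 1/6 := by linarith
  have hQ : c^4+s^4 = 2/3 := by nlinarith [sq_nonneg (c^2+s^2)]
  have hY : Y^2 = 1 - X^2 := by linarith
  have e1 : (c^2+s^2*X)^2 + (s^2*Y)^2 = c^4 + s^4*(X^2+Y^2) + 2*(c^2*s^2)*X := by ring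
  have e2 : c^2*s^2*((1-X)^2+Y^2) = (c^2*s^2)*(2-2*X) + (c^2*s^2)*(X^2+Y^2-1) := by ring
  have e3 : (s^2+c^2*X)^2+(c^2*Y)^2 = s^4 + c^4*(X^2+Y^2) + 2*(c^2*s^2)*X := by ring
  rw [e1, e2, e3, h3, hP]
  have e4 : s^4*1 = 2/3 - c^4 := by nlinarith
  rw [e4]
  have e5 : c^4*1 = 2/3 - s^4 := by nlinarith
  rw [e5]
  nlinarith [hQ]

/-- the table of the two states' real coordinates -/
def qv (c s : ℝ) : Fin 2 → Fin 2 → ℝ := fun a => if a = 0 then ![c, s] else ![s, -c]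

lemma qv_sum (c s X Y : ℝ) (h1 : c^2+s^2 = 1) (h2 : 4*c^2*s^2 = 2/3) (h3 : X^2+Y^2 = 1) :
    ∑ a : Fin 2, ∑ b : Fin 2,
      ((qv c s a 0 * qv c s b 0 + qv c s a 1 * qv c s b 1 * X)^2
        + (qv c s a 1 * qv c s b 1 * Y)^2)^3 = 2/3*(1+X+X^2) := by
  have h := key_id c s X Y h1 h2 h3
  simp only [Fin.sum_univ_two, qv]
  norm_num
  linear_combination h

/-- the qubit states `|ψ⟩ = (cos(θ/2), sin(θ/2))`,
`|ψ⊥⟩ = (sin(θ/2), −cos(θ/2))` together with the diagonal unitary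
`U = diag(1, e^{iγ})`, `γ = 2π/(k+1)`, generate `2(k+1)` vectors
`U^j|ψ⟩, U^j|ψ⊥⟩` (`j = 0,…,k`). If `sin²θ = 2/3` and `k ≥ 2`, this family of
vectors saturates the Welch bound for `t = 3`:
`∑_{pairs} |⟨·,·⟩|⁶ = (2(k+1))² / C(4,3)`. -/
theorem cyclic_qubit_three_design (θ : ℝ) (k : ℕ) (hk : 2 ≤ k)
    (hθ : Real.sin θ ^ 2 = 2 / 3) :
    (let γ : ℝ := 2 * Real.pi / (k + 1)
     let ψ : Fin 2 → ℂ := ![(Real.cos (θ / 2) : ℂ), (Real.sin (θ / 2) : ℂ)]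
     let ψp : Fin 2 → ℂ := ![(Real.sin (θ / 2) : ℂ), -(Real.cos (θ / 2) : ℂ)]
     let U : Matrix (Fin 2) (Fin 2) ℂ := Matrix.diagonal ![1, Complex.exp (γ * Complex.I)]
     let f : Fin (k + 1) × Fin 2 → Fin 2 → ℂ :=
       fun p => (U ^ (p.1 : ℕ)).mulVec (if p.2 = 0 then ψ else ψp)
     ∑ p : Fin (k + 1) × Fin 2, ∑ q : Fin (k + 1) × Fin 2,
         ‖∑ i : Fin 2, conj (f p i) * f q i‖ ^ 6
       = (2 * ((k : ℝ) + 1)) ^ 2 / (Nat.choose 4 3 : ℝ)) := by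
  intro γ ψ ψp U f
  set c : ℝ := Real.cos (θ/2) with hc
  set s : ℝ := Real.sin (θ/2) with hs
  have h1 : c^2 + s^2 = 1 := by rw [hc, hs]; rw [add_comm]; exact Real.sin_sq_add_cos_sq _
  have h2 : 4*c^2*s^2 = 2/3 := by
    rw [← hθ, show θ = 2*(θ/2) by ring, Real.sin_two_mul]; rw [hc, hs]; ring
  -- f evaluated
  have hf : ∀ (j : Fin (k+1)) (a : Fin 2) (i : Fin 2),
      f (j, a) i = (![1, Complex.exp (γ * Complex.I)] i)^(j:ℕ) * (if a = 0 then ψ else ψp) i := by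
    intro j a i
    show (U ^ (j:ℕ)).mulVec _ i = _
    rw [show U = Matrix.diagonal ![1, Complex.exp (γ * Complex.I)] from rfl,
      Matrix.diagonal_pow, Matrix.mulVec_diagonal]
    rfl
  have hψ : ∀ (a i : Fin 2), (if a = 0 then ψ else ψp) i = ((qv c s a i : ℝ) : ℂ) := by
    intro a i
    fin_cases a <;> fin_cases i <;> simp [ψ, ψp, qv, hc, hs]
  have hexp : ∀ j : Fin (k+1), Complex.exp (γ*Complex.I) ^ (j:ℕ)
      = ((Real.cos ((j:ℕ)*γ) : ℝ) : ℂ) + ((Real.sin ((j:ℕ)*γ) : ℝ) : ℂ) * I := by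
    intro j
    rw [← Complex.exp_nat_mul,
      show ((j:ℕ):ℂ) * ((γ:ℂ) * I) = (((j:ℕ)*γ : ℝ) : ℂ) * I by push_cast; ring,
      Complex.exp_mul_I, Complex.ofReal_cos, Complex.ofReal_sin]
  -- abbreviations
  set cc : Fin (k+1) → ℝ := fun j => Real.cos ((j:ℕ)*γ) with hcc
  set ss : Fin (k+1) → ℝ := fun j => Real.sin ((j:ℕ)*γ) with hss
  have hsum : ∀ (j l : Fin (k+1)) (a b : Fin 2),
      ∑ i : Fin 2, conj (f (j,a) i) * f (l,b) i
      = ((qv c s a 0 * qv c s b 0 + qv c s a 1 * qv c s b 1 * (cc j * cc l + ss j * ss l) : ℝ) : ℂ)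
        + ((qv c s a 1 * qv c s b 1 * (cc j * ss l - ss j * cc l) : ℝ) : ℂ) * I := by
    intro j l a b
    rw [Fin.sum_univ_two, hf, hf, hf, hf, hψ, hψ, hψ, hψ]
    simp only [Matrix.cons_val_zero, Matrix.cons_val_one, Matrix.head_cons, one_pow,
      hexp j, hexp l, hcc, hss]
    simp only [_root_.map_one, _root_.map_mul, _root_.map_add, Complex.conj_ofReal,
      Complex.conj_I]
    push_cast [← Complex.ofReal_sin, ← Complex.ofReal_cos]
    linear_combination (-((qv c s a 1 : ℝ):ℂ) * ((qv c s b 1 : ℝ):ℂ)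
      * ((Real.sin ((j:ℕ)*γ) : ℝ):ℂ) * ((Real.sin ((l:ℕ)*γ) : ℝ):ℂ)) * Complex.I_sq
  have habs : ∀ (j l : Fin (k+1)) (a b : Fin 2),
      ‖∑ i : Fin 2, conj (f (j,a) i) * f (l,b) i‖ ^ 6
      = ((qv c s a 0 * qv c s b 0 + qv c s a 1 * qv c s b 1 * (cc j * cc l + ss j * ss l))^2
          + (qv c s a 1 * qv c s b 1 * (cc j * ss l - ss j * cc l))^2)^3 := by
    intro j l a b
    rw [hsum, show (6:ℕ) = 2*3 from rfl, pow_mul, Complex.sq_norm, Complex.normSq_add_mul_I]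
  -- basic trig sums
  have hn3 : (3:ℝ) ≤ (k:ℝ) + 1 := by
    have : (2:ℝ) ≤ (k:ℝ) := by exact_mod_cast hk
    linarith
  have hnpos : (0:ℝ) < (k:ℝ) + 1 := by linarith
  have hπ := Real.pi_pos
  have hγpos : 0 < γ := by
    show 0 < 2*Real.pi/((k:ℝ)+1)
    positivity
  have hγlt : γ < 2*Real.pi := by
    show 2*Real.pi/((k:ℝ)+1) < 2*Real.pi
    rw [div_lt_iff₀ hnpos]
    nlinarith
  have hne : ∀ t : ℝ, 0 < t → t < 2*Real.pi → Complex.exp (t * Complex.I) ≠ 1 := by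
    intro t ht0 ht2 h
    rw [Complex.exp_eq_one_iff] at h
    obtain ⟨m, hm⟩ := h
    have h2 : (t:ℂ) = (m:ℂ) * (2*(Real.pi:ℂ)) :=
      mul_right_cancel₀ Complex.I_ne_zero (by linear_combination hm)
    have ht : t = m * (2*Real.pi) := by exact_mod_cast h2
    have hm0 : 0 < (m:ℝ) := by nlinarith
    have hm1 : (m:ℝ) < 1 := by nlinarith
    have : 0 < m := by exact_mod_cast hm0
    have : m < 1 := by exact_mod_cast hm1
    omega
  have hroot1 : Complex.exp (γ * Complex.I) ^ (k+1) = 1 := by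
    rw [← Complex.exp_nat_mul,
      show ((k+1:ℕ):ℂ) * ((γ:ℂ)*I) = (((k+1:ℕ):ℝ)*γ : ℝ) * I by push_cast; ring,
      show (((k+1:ℕ):ℝ)*γ : ℝ) = 2*Real.pi by
        push_cast
        show ((k:ℝ)+1) * (2*Real.pi/((k:ℝ)+1)) = 2*Real.pi
        field_simp]
    push_cast
    exact Complex.exp_two_pi_mul_I
  have hroot2 : Complex.exp (((2*γ:ℝ):ℂ) * Complex.I) ^ (k+1) = 1 := by
    have hsq : Complex.exp (((2*γ:ℝ):ℂ) * Complex.I) = Complex.exp ((γ:ℂ) * Complex.I) ^ 2 := by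
      rw [sq, ← Complex.exp_add]
      congr 1
      push_cast
      ring
    rw [hsq, ← pow_mul, mul_comm 2 (k+1), pow_mul, hroot1, one_pow]
  have hcs1 := cos_sin_sum (k+1) γ (hne γ hγpos hγlt) hroot1
  have hγmul : γ * ((k:ℝ)+1) = 2*Real.pi := by
    show 2*Real.pi/((k:ℝ)+1) * ((k:ℝ)+1) = 2*Real.pi
    field_simp
  have h2γ : 2*γ < 2*Real.pi := by
    nlinarith [mul_pos hγpos (show (0:ℝ) < (k:ℝ)+1-2 by linarith)]
  have hcs2 := cos_sin_sum (k+1) (2*γ) (hne (2*γ) (by linarith) h2γ) hroot2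
  have hjl : ∀ j : Fin (k+1), (cc j)^2 + (ss j)^2 = 1 := by
    intro j
    show (Real.cos ((j:ℕ)*γ))^2 + (Real.sin ((j:ℕ)*γ))^2 = 1
    rw [add_comm]; exact Real.sin_sq_add_cos_sq _
  have Sc : ∑ j : Fin (k+1), cc j = 0 := hcs1.1
  have Ss : ∑ j : Fin (k+1), ss j = 0 := hcs1.2
  have Sc2 : ∑ j : Fin (k+1), (cc j)^2 = ((k:ℝ)+1)/2 := by
    have e : ∀ j : Fin (k+1), (cc j)^2 = 1/2 + Real.cos ((j:ℕ)*(2*γ))/2 := by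
      intro j
      show (Real.cos ((j:ℕ)*γ))^2 = _
      rw [Real.cos_sq, show ((j:ℕ):ℝ)*(2*γ) = 2*(((j:ℕ):ℝ)*γ) by ring]
    rw [Finset.sum_congr rfl fun j _ => e j, Finset.sum_add_distrib, Finset.sum_const,
      Finset.card_univ, Fintype.card_fin, ← Finset.sum_div, hcs2.1]
    push_cast [nsmul_eq_mul]
    ring
  have Ss2 : ∑ j : Fin (k+1), (ss j)^2 = ((k:ℝ)+1)/2 := by
    have e : ∀ j : Fin (k+1), (ss j)^2 = 1 - (cc j)^2 := by
      intro j; have := hjl j; linarith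
    rw [Finset.sum_congr rfl fun j _ => e j, Finset.sum_sub_distrib, Finset.sum_const,
      Finset.card_univ, Fintype.card_fin, Sc2]
    push_cast [nsmul_eq_mul]
    ring
  have Scs : ∑ j : Fin (k+1), cc j * ss j = 0 := by
    have e : ∀ j : Fin (k+1), cc j * ss j = Real.sin ((j:ℕ)*(2*γ))/2 := by
      intro j
      show Real.cos ((j:ℕ)*γ) * Real.sin ((j:ℕ)*γ) = _
      rw [show ((j:ℕ):ℝ)*(2*γ) = 2*(((j:ℕ):ℝ)*γ) by ring, Real.sin_two_mul]
      ring
    rw [Finset.sum_congr rfl fun j _ => e j, ← Finset.sum_div, hcs2.2]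
    simp
  have hpair : ∀ j l : Fin (k+1),
      ∑ a : Fin 2, ∑ b : Fin 2,
        ((qv c s a 0 * qv c s b 0 + qv c s a 1 * qv c s b 1 * (cc j * cc l + ss j * ss l))^2
          + (qv c s a 1 * qv c s b 1 * (cc j * ss l - ss j * cc l))^2)^3
      = 2/3*(1 + (cc j * cc l + ss j * ss l) + (cc j * cc l + ss j * ss l)^2) := by
    intro j l
    refine qv_sum c s _ _ h1 h2 ?_
    linear_combination ((cc l)^2 + (ss l)^2) * hjl j + hjl l
  simp only [Fintype.sum_prod_type]
  simp only [habs]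
  conv_lhs => enter [2, j]; rw [Finset.sum_comm]
  simp only [hpair]
  have expand : ∀ j l : Fin (k+1),
      2/3*(1 + (cc j * cc l + ss j * ss l) + (cc j * cc l + ss j * ss l)^2)
      = 2/3 + (2/3*cc j)*cc l + (2/3*ss j)*ss l + (2/3*(cc j)^2)*((cc l)^2)
        + (4/3*(cc j*ss j))*(cc l*ss l) + (2/3*(ss j)^2)*((ss l)^2) := by
    intro j l; ring
  simp only [expand]
  have inner : ∀ j : Fin (k+1),
      ∑ l : Fin (k+1), (2/3 + (2/3*cc j)*cc l + (2/3*ss j)*ss l + (2/3*(cc j)^2)*((cc l)^2)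
        + (4/3*(cc j*ss j))*(cc l*ss l) + (2/3*(ss j)^2)*((ss l)^2)) = (k:ℝ)+1 := by
    intro j
    rw [Finset.sum_add_distrib, Finset.sum_add_distrib, Finset.sum_add_distrib,
      Finset.sum_add_distrib, Finset.sum_add_distrib,
      ← Finset.mul_sum, ← Finset.mul_sum, ← Finset.mul_sum, ← Finset.mul_sum, ← Finset.mul_sum,
      Sc, Ss, Sc2, Ss2, Scs, Finset.sum_const, Finset.card_univ, Fintype.card_fin]
    push_cast [nsmul_eq_mul]
    linear_combination ((k:ℝ)+1)/3 * hjl j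
  simp only [inner]
  rw [Finset.sum_const, Finset.card_univ, Fintype.card_fin]
  push_cast [nsmul_eq_mul]
  norm_num
  ring
end

section
/- Let M be the symmetric array indexed by pairs, with entries M^{αβ}_{μν} = ⟨p_α p_β p_μ p_ν⟩ equal to the average of the monomial p_α p_β p_μ p_ν over the probability simplex Δ_d with respect to the flat Lebesgue measure. Then, viewing M as a linear operator on symmetric matrices x_{(μν)}, M has trivial kernel on the symmetric subspace; equivalently, rank(M) = d(d+1)/2. -/
/-- Average of the monomial `p_α p_β p_μ p_ν` over the probability simplex `Δ_d`
with respect to the flat Lebesgue measure, given by the Dirichlet/Beta integral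
`⟨∏ p_γ^{κ_γ}⟩ = (d−1)!·∏ κ_γ! / (d+3)!`, where `κ_γ` is the multiplicity of
`γ` among `(α, β, μ, ν)`. -/
noncomputable def simplexFourthMoment (d : ℕ) (α β μ ν : Fin d) : ℝ :=
  ((d - 1).factorial *
      ∏ γ : Fin d, (({α, β, μ, ν} : Multiset (Fin d)).count γ).factorial : ℝ)
    / (d + 3).factorial

namespace FourthMomentAux

noncomputable def ee {d : ℕ} (a b : Fin d) : ℝ := if a = b then 1 else 0

noncomputable def NN {d : ℕ} (α β μ ν : Fin d) : ℝ :=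
  1 + (ee α β + ee μ ν + ee α μ + ee α ν + ee β μ + ee β ν)
    + (ee α β * ee μ ν + ee α μ * ee β ν + ee α ν * ee β μ)
    + 2 * (ee α β * ee α μ + ee α β * ee α ν + ee α μ * ee α ν + ee β μ * ee μ ν)
    + 6 * (ee α β * ee α μ * ee α ν)

lemma prod_count_factorial {d : ℕ} (s : Multiset (Fin d)) :
    ∏ γ : Fin d, (s.count γ).factorial = ∏ γ ∈ s.toFinset, (s.count γ).factorial := by
  refine (Finset.prod_subset (Finset.subset_univ _) ?_).symm
  intro y _ hy
  rw [Multiset.count_eq_zero_of_notMem (by simpa using hy)]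
  rfl

set_option maxHeartbeats 1000000 in
lemma prod_eq_NN {d : ℕ} (α β μ ν : Fin d) :
    ((∏ γ : Fin d, (({α, β, μ, ν} : Multiset (Fin d)).count γ).factorial : ℕ) : ℝ)
      = NN α β μ ν := by
  rw [prod_count_factorial]
  by_cases h1 : α = β <;> by_cases h2 : α = μ <;> by_cases h3 : α = ν <;>
    by_cases h4 : β = μ <;> by_cases h5 : β = ν <;> by_cases h6 : μ = ν <;>
    simp_all [NN, ee, Multiset.count_cons, Multiset.count_singleton, Nat.factorial,
      Finset.prod_insert, Multiset.toFinset_cons, Multiset.toFinset_singleton, eq_comm] <;>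
    norm_num

lemma moment_eq {d : ℕ} (α β μ ν : Fin d) :
    simplexFourthMoment d α β μ ν
      = ((d - 1).factorial : ℝ) / (d + 3).factorial * NN α β μ ν := by
  rw [simplexFourthMoment]
  rw [show ((d - 1).factorial *
      ∏ γ : Fin d, (({α, β, μ, ν} : Multiset (Fin d)).count γ).factorial : ℝ)
      = ((d - 1).factorial : ℝ) *
        ((∏ γ : Fin d, (({α, β, μ, ν} : Multiset (Fin d)).count γ).factorial : ℕ) : ℝ) by
    push_cast; ring]
  rw [prod_eq_NN]; ring

lemma sum_NN {d : ℕ} (x : Matrix (Fin d) (Fin d) ℝ) (hsymm : ∀ μ ν, x μ ν = x ν μ)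
    (α β : Fin d) :
    ∑ μ : Fin d, ∑ ν : Fin d, NN α β μ ν * x μ ν
      = (∑ μ : Fin d, ∑ ν : Fin d, x μ ν) + (∑ μ : Fin d, x μ μ)
        + 2 * (∑ ν : Fin d, x α ν) + 2 * (∑ ν : Fin d, x β ν)
        + 2 * x α β + 2 * x α α + 2 * x β β
        + ee α β * ((∑ μ : Fin d, ∑ ν : Fin d, x μ ν) + (∑ μ : Fin d, x μ μ)
            + 4 * (∑ ν : Fin d, x α ν) + 6 * x α α) := by
  have pt : ∀ μ ν : Fin d, NN α β μ ν * x μ ν =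
      x μ ν + ee α β * x μ ν + ee μ ν * x μ ν + ee α μ * x μ ν + ee α ν * x μ ν
      + ee β μ * x μ ν + ee β ν * x μ ν + ee α β * (ee μ ν * x μ ν)
      + ee α μ * (ee β ν * x μ ν) + ee α ν * (ee β μ * x μ ν)
      + 2 * (ee α β * (ee α μ * x μ ν)) + 2 * (ee α β * (ee α ν * x μ ν))
      + 2 * (ee α μ * (ee α ν * x μ ν)) + 2 * (ee β μ * (ee μ ν * x μ ν))
      + 6 * (ee α β * (ee α μ * (ee α ν * x μ ν))) := by
    intro μ ν; simp only [NN]; ring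
  simp only [pt, Finset.sum_add_distrib]
  have H2 : ∑ μ : Fin d, ∑ ν : Fin d, ee α β * x μ ν
      = ee α β * ∑ μ : Fin d, ∑ ν : Fin d, x μ ν := by
    simp [Finset.mul_sum]
  have H3 : ∑ μ : Fin d, ∑ ν : Fin d, ee μ ν * x μ ν = ∑ μ : Fin d, x μ μ := by
    simp [ee, ite_mul, Finset.sum_ite_eq]
  have H4 : ∑ μ : Fin d, ∑ ν : Fin d, ee α μ * x μ ν = ∑ ν : Fin d, x α ν := by
    simp [ee, ite_mul, Finset.sum_ite_eq,
      ← Finset.sum_ite_eq (Finset.univ) α (fun μ => ∑ ν, x μ ν)]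
  have H5 : ∑ μ : Fin d, ∑ ν : Fin d, ee α ν * x μ ν = ∑ ν : Fin d, x α ν := by
    have h : ∑ μ : Fin d, ∑ ν : Fin d, ee α ν * x μ ν = ∑ μ : Fin d, x μ α := by
      simp [ee, ite_mul, Finset.sum_ite_eq]
    rw [h]; exact Finset.sum_congr rfl fun μ _ => hsymm μ α
  have H6 : ∑ μ : Fin d, ∑ ν : Fin d, ee β μ * x μ ν = ∑ ν : Fin d, x β ν := by
    simp [ee, ite_mul, Finset.sum_ite_eq,
      ← Finset.sum_ite_eq (Finset.univ) β (fun μ => ∑ ν, x μ ν)]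
  have H7 : ∑ μ : Fin d, ∑ ν : Fin d, ee β ν * x μ ν = ∑ ν : Fin d, x β ν := by
    have h : ∑ μ : Fin d, ∑ ν : Fin d, ee β ν * x μ ν = ∑ μ : Fin d, x μ β := by
      simp [ee, ite_mul, Finset.sum_ite_eq]
    rw [h]; exact Finset.sum_congr rfl fun μ _ => hsymm μ β
  have H8 : ∑ μ : Fin d, ∑ ν : Fin d, ee α β * (ee μ ν * x μ ν)
      = ee α β * ∑ μ : Fin d, x μ μ := by
    rw [show ∑ μ : Fin d, ∑ ν : Fin d, ee α β * (ee μ ν * x μ ν)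
        = ee α β * ∑ μ : Fin d, ∑ ν : Fin d, ee μ ν * x μ ν by simp [Finset.mul_sum], H3]
  have H9 : ∑ μ : Fin d, ∑ ν : Fin d, ee α μ * (ee β ν * x μ ν) = x α β := by
    simp [ee, ite_mul, Finset.sum_ite_eq]
  have H10 : ∑ μ : Fin d, ∑ ν : Fin d, ee α ν * (ee β μ * x μ ν) = x α β := by
    have h : ∑ μ : Fin d, ∑ ν : Fin d, ee α ν * (ee β μ * x μ ν) = x β α := by
      simp [ee, ite_mul, Finset.sum_ite_eq]
    rw [h]; exact hsymm β α
  have H11 : ∑ μ : Fin d, ∑ ν : Fin d, 2 * (ee α β * (ee α μ * x μ ν))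
      = 2 * (ee α β * ∑ ν : Fin d, x α ν) := by
    rw [show ∑ μ : Fin d, ∑ ν : Fin d, 2 * (ee α β * (ee α μ * x μ ν))
        = 2 * (ee α β * ∑ μ : Fin d, ∑ ν : Fin d, ee α μ * x μ ν) by simp [Finset.mul_sum], H4]
  have H12 : ∑ μ : Fin d, ∑ ν : Fin d, 2 * (ee α β * (ee α ν * x μ ν))
      = 2 * (ee α β * ∑ ν : Fin d, x α ν) := by
    rw [show ∑ μ : Fin d, ∑ ν : Fin d, 2 * (ee α β * (ee α ν * x μ ν))
        = 2 * (ee α β * ∑ μ : Fin d, ∑ ν : Fin d, ee α ν * x μ ν) by simp [Finset.mul_sum], H5]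
  have H13 : ∑ μ : Fin d, ∑ ν : Fin d, 2 * (ee α μ * (ee α ν * x μ ν)) = 2 * x α α := by
    have h : ∑ μ : Fin d, ∑ ν : Fin d, ee α μ * (ee α ν * x μ ν) = x α α := by
      simp [ee, ite_mul, Finset.sum_ite_eq]
    rw [show ∑ μ : Fin d, ∑ ν : Fin d, 2 * (ee α μ * (ee α ν * x μ ν))
        = 2 * ∑ μ : Fin d, ∑ ν : Fin d, ee α μ * (ee α ν * x μ ν) by simp [Finset.mul_sum], h]
  have H14 : ∑ μ : Fin d, ∑ ν : Fin d, 2 * (ee β μ * (ee μ ν * x μ ν)) = 2 * x β β := by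
    have h : ∑ μ : Fin d, ∑ ν : Fin d, ee β μ * (ee μ ν * x μ ν) = x β β := by
      simp [ee, ite_mul, Finset.sum_ite_eq]
    rw [show ∑ μ : Fin d, ∑ ν : Fin d, 2 * (ee β μ * (ee μ ν * x μ ν))
        = 2 * ∑ μ : Fin d, ∑ ν : Fin d, ee β μ * (ee μ ν * x μ ν) by simp [Finset.mul_sum], h]
  have H15 : ∑ μ : Fin d, ∑ ν : Fin d, 6 * (ee α β * (ee α μ * (ee α ν * x μ ν)))
      = 6 * (ee α β * x α α) := by
    have h : ∑ μ : Fin d, ∑ ν : Fin d, ee α μ * (ee α ν * x μ ν) = x α α := by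
      simp [ee, ite_mul, Finset.sum_ite_eq]
    rw [show ∑ μ : Fin d, ∑ ν : Fin d, 6 * (ee α β * (ee α μ * (ee α ν * x μ ν)))
        = 6 * (ee α β * ∑ μ : Fin d, ∑ ν : Fin d, ee α μ * (ee α ν * x μ ν)) by
      simp [Finset.mul_sum], h]
  rw [H2, H3, H4, H5, H6, H7, H8, H9, H10, H11, H12, H13, H14, H15]
  ring

end FourthMomentAux


open FourthMomentAux

/-- the fourth-moment array `M^{αβ}_{μν} = ⟨p_α p_β p_μ p_ν⟩_{Δ_d}`,
viewed as a linear operator on symmetric matrices, has trivial kernel on the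
symmetric subspace; equivalently `rank(M) = d(d+1)/2`. -/
theorem fourth_moment_matrix_full_rank (d : ℕ) (hd : 1 ≤ d)
    (x : Matrix (Fin d) (Fin d) ℝ) (hsymm : ∀ μ ν, x μ ν = x ν μ)
    (hker : ∀ α β : Fin d,
      ∑ μ : Fin d, ∑ ν : Fin d, simplexFourthMoment d α β μ ν * x μ ν = 0) :
    x = 0 := by
  have hcpos : (0:ℝ) < ((d - 1).factorial : ℝ) / (d + 3).factorial :=
    div_pos (Nat.cast_pos.2 (Nat.factorial_pos _)) (Nat.cast_pos.2 (Nat.factorial_pos _))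
  set c : ℝ := ((d - 1).factorial : ℝ) / (d + 3).factorial with hc
  set S : ℝ := ∑ μ : Fin d, ∑ ν : Fin d, x μ ν with hS'
  set T : ℝ := ∑ μ : Fin d, x μ μ with hT'
  set R : Fin d → ℝ := fun α => ∑ ν : Fin d, x α ν with hR'
  have key : ∀ α β : Fin d,
      S + T + 2 * R α + 2 * R β + 2 * x α β + 2 * x α α + 2 * x β β
        + ee α β * (S + T + 4 * R α + 6 * x α α) = 0 := by
    intro α β
    have h := hker α β
    have h2 : ∑ μ : Fin d, ∑ ν : Fin d, simplexFourthMoment d α β μ ν * x μ ν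
        = c * ∑ μ : Fin d, ∑ ν : Fin d, NN α β μ ν * x μ ν := by
      simp only [moment_eq, mul_assoc, Finset.mul_sum, hc]
    rw [h2, sum_NN x hsymm α β] at h
    rcases mul_eq_zero.1 h with h | h
    · exact absurd h (ne_of_gt hcpos)
    · linarith [h]
  have D : ∀ α : Fin d, S + T + 4 * R α + 6 * x α α = 0 := by
    intro α
    have h := key α α
    simp [ee] at h
    linarith
  have E : ∀ α β : Fin d,
      S + T + 2 * R α + 2 * R β + 2 * x α β + 2 * x α α + 2 * x β β = 0 := by
    intro α β
    by_cases h : α = β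
    · subst h; have := D α; linarith
    · have hk := key α β
      simp [ee, h] at hk
      linarith
  have hsumR : ∑ α : Fin d, R α = S := by rw [hS', hR']
  have hsumD : (d : ℝ) * S + (d : ℝ) * T + 4 * S + 6 * T = 0 := by
    have hz : ∑ α : Fin d, (S + T + 4 * R α + 6 * x α α) = 0 :=
      Finset.sum_eq_zero fun α _ => D α
    rw [Finset.sum_add_distrib, Finset.sum_add_distrib, Finset.sum_add_distrib,
      ← Finset.mul_sum, ← Finset.mul_sum, hsumR, Finset.sum_const, Finset.card_univ,
      Fintype.card_fin, nsmul_eq_mul, Finset.sum_const, Finset.card_univ, Fintype.card_fin,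
      nsmul_eq_mul, ← hT'] at hz
    linarith
  have hsumE : (d:ℝ)^2 * S + (d:ℝ)^2 * T + 4 * (d:ℝ) * S + 2 * S + 4 * (d:ℝ) * T = 0 := by
    have hz : ∑ α : Fin d, ∑ β : Fin d,
        (S + T + 2 * R α + 2 * R β + 2 * x α β + 2 * x α α + 2 * x β β) = 0 :=
      Finset.sum_eq_zero fun α _ => Finset.sum_eq_zero fun β _ => E α β
    have hinner : ∀ α : Fin d, ∑ β : Fin d,
        (S + T + 2 * R α + 2 * R β + 2 * x α β + 2 * x α α + 2 * x β β)
        = (d:ℝ) * S + (d:ℝ) * T + 2 * (d:ℝ) * R α + 2 * S + 2 * R α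
          + 2 * (d:ℝ) * x α α + 2 * T := by
      intro α
      simp only [Finset.sum_add_distrib, Finset.sum_const, Finset.card_univ,
        Fintype.card_fin, nsmul_eq_mul, ← Finset.mul_sum]
      rw [hsumR, show ∑ ν : Fin d, x α ν = R α from rfl,
        show ∑ μ : Fin d, x μ μ = T from rfl]
      ring
    rw [Finset.sum_congr rfl fun α _ => hinner α] at hz
    simp only [Finset.sum_add_distrib, Finset.sum_const, Finset.card_univ,
      Fintype.card_fin, nsmul_eq_mul, ← Finset.mul_sum] at hz
    rw [hsumR, show ∑ μ : Fin d, x μ μ = T from rfl] at hz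
    linear_combination hz
  have hT0 : T = 0 := by
    have h3 : (2 * (d:ℝ)^2 + 10 * (d:ℝ) + 12) * T = 0 := by
      linear_combination ((d:ℝ)^2 + 4*(d:ℝ) + 2) * hsumD - ((d:ℝ) + 4) * hsumE
    have hpos : (0:ℝ) < 2 * (d:ℝ)^2 + 10 * (d:ℝ) + 12 := by positivity
    rcases mul_eq_zero.1 h3 with h | h
    · exact absurd h (ne_of_gt hpos)
    · exact h
  have hS0 : S = 0 := by
    have h4 : ((d:ℝ) + 4) * S = 0 := by
      rw [hT0] at hsumD; linear_combination hsumD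
    have hpos : (0:ℝ) < (d:ℝ) + 4 := by positivity
    rcases mul_eq_zero.1 h4 with h | h
    · exact absurd h (ne_of_gt hpos)
    · exact h
  have hx : ∀ α β : Fin d, x α β = -(R α + R β) / 3 := by
    intro α β
    have h1 := E α β
    have h2 := D α
    have h3 := D β
    rw [hS0, hT0] at h1 h2 h3
    linarith
  have hR0 : ∀ α : Fin d, R α = 0 := by
    intro α
    have h5 : R α = ∑ β : Fin d, (-(R α + R β) / 3) := by
      rw [hR']
      exact Finset.sum_congr rfl fun β _ => hx α β
    have h6 : ∑ β : Fin d, (-(R α + R β) / 3) = -((d:ℝ) * R α + S) / 3 := by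
      rw [← hsumR, ← Finset.sum_div]
      congr 1
      rw [Finset.sum_neg_distrib, Finset.sum_add_distrib, Finset.sum_const,
        Finset.card_univ, Fintype.card_fin, nsmul_eq_mul]
    rw [h6, hS0] at h5
    have : ((d:ℝ) + 3) * R α = 0 := by linarith
    have hpos : (0:ℝ) < (d:ℝ) + 3 := by positivity
    rcases mul_eq_zero.1 this with h | h
    · exact absurd h (ne_of_gt hpos)
    · exact h
  ext μ ν
  rw [hx μ ν, hR0 μ, hR0 ν]
  norm_num
end

section
/- There exists no d-point 4-design in the probability simplex Δ_d: any set of N probability vectors p^{(1)},…,p^{(N)} ∈ Δ_d whose fourth moments match those of the uniform measure on Δ_d (i.e., (1/N)∑_i p^{(i)}_α p^{(i)}_β p^{(i)}_μ p^{(i)}_ν = ⟨p_α p_β p_μ p_ν⟩_{Δ_d} for all indices) must satisfy N ≥ d(d+1)/2 > d (for d ≥ 2). -/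
open Finset Nat

section
variable {ι κ : Type*} [Fintype ι] [Fintype κ]

theorem sum_sum_mul_right (Q : ι → ι → ℝ) (f : ι → ℝ) :
    ∑ x, ∑ y, Q x y * f y = ∑ y, (∑ x, Q x y) * f y := by
  rw [sum_comm]
  simp only [sum_mul]

theorem sum_mul_sum_fourth_moment (Q : ι → ι → ℝ) (p : κ → ι → ℝ) :
    ∑ α, ∑ β, ∑ μ, ∑ ν, Q α β * Q μ ν * ∑ i, p i α * p i β * p i μ * p i ν
      = ∑ i, (∑ a, ∑ b, Q a b * p i a * p i b) ^ 2 := by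
  conv_lhs => simp only [mul_sum, sum_comm (t := (univ : Finset κ))]
  simp only [sq, sum_mul]
  simp only [mul_sum]
  ac_rfl

theorem exists_symm_ne_zero_forall_sum_mul_eq_zero (p : κ → ι → ℝ)
    (h : Fintype.card κ < Fintype.card (Sym2 ι)) :
    ∃ Q : ι → ι → ℝ, (∀ a b, Q a b = Q b a) ∧ Q ≠ 0 ∧
      ∀ i, ∑ a, ∑ b, Q a b * p i a * p i b = 0 := by
  let f : (Sym2 ι → ℝ) →ₗ[ℝ] κ → ℝ :=
    { toFun := fun q i => ∑ a, ∑ b, q s(a, b) * p i a * p i b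
      map_add' := fun q r => by
        funext i
        simp only [Pi.add_apply, add_mul, sum_add_distrib]
      map_smul' := fun c q => by
        funext i
        simp only [Pi.smul_apply, smul_eq_mul, RingHom.id_apply, mul_assoc, ← mul_sum] }
  have hker : LinearMap.ker f ≠ ⊥ := LinearMap.ker_ne_bot_of_finrank_lt <| by
    simpa only [Module.finrank_fintype_fun_eq_card] using h
  obtain ⟨q, hq, hq0⟩ := (Submodule.ne_bot_iff _).mp hker
  refine ⟨fun a b => q s(a, b), fun a b => congrArg q Sym2.eq_swap, fun hQ => hq0 ?_,
    fun i => congrFun hq i⟩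
  funext z
  induction z using Sym2.ind with
  | _ a b => exact congrFun (congrFun hQ a) b

variable [DecidableEq ι]

theorem prod_factorial_count_cons (a : ι) (m : Multiset ι) :
    ∏ γ, ((a ::ₘ m).count γ)! = (m.count a + 1) * ∏ γ, (m.count γ)! := by
  rw [← mul_prod_erase _ _ (mem_univ a), ← mul_prod_erase _ (fun γ => (m.count γ)!) (mem_univ a),
    Multiset.count_cons_self, factorial_succ, mul_assoc]
  congr 2
  exact prod_congr rfl fun γ hγ => by rw [Multiset.count_cons_of_ne (ne_of_mem_erase hγ)]

theorem prod_factorial_count_four (α β μ ν : ι) :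
    ∏ γ, (({α, β, μ, ν} : Multiset ι).count γ)! =
      ((if α = β then 1 else 0) + (if α = μ then 1 else 0) + (if α = ν then 1 else 0) + 1) *
        (((if β = μ then 1 else 0) + (if β = ν then 1 else 0) + 1) *
          ((if μ = ν then 1 else 0) + 1)) := by
  change ∏ γ, ((α ::ₘ β ::ₘ μ ::ₘ ν ::ₘ 0).count γ)! = _
  rw [prod_factorial_count_cons, prod_factorial_count_cons, prod_factorial_count_cons,
    prod_factorial_count_cons]
  simp only [Multiset.count_cons, Multiset.count_zero, factorial_zero, prod_const_one]
  ring

theorem sum_mul_prod_factorial_count_four (Q : ι → ι → ℝ) :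
    ∑ α, ∑ β, ∑ μ, ∑ ν, Q α β * Q μ ν * (∏ γ, (({α, β, μ, ν} : Multiset ι).count γ)! : ℕ)
      = (∑ a, ∑ b, Q a b + ∑ a, Q a a) ^ 2
        + ∑ a, (∑ b, Q a b + ∑ b, Q b a + 2 * Q a a) ^ 2
        + ∑ a, ∑ b, (Q a b ^ 2 + Q a b * Q b a) + 2 * ∑ a, Q a a ^ 2 := by
  simp only [prod_factorial_count_four]
  push_cast [apply_ite (Nat.cast : ℕ → ℝ)]
  simp only [mul_add, mul_ite, mul_one, mul_zero, sum_add_distrib, sum_ite_irrel, sum_ite_eq,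
    mem_univ, if_true, sum_const_zero]
  simp only [← mul_sum, ← sum_mul, sum_sum_mul_right]
  ring_nf
  simp only [sum_add_distrib, ← sum_mul]
  -- `ring` treats each sum as an atom, so the factors inside the sums must be put in one order
  simp only [mul_comm]
  ring

theorem sum_mul_prod_factorial_count_four_pos {Q : ι → ι → ℝ} (hQ : ∀ a b, Q a b = Q b a)
    (hQ0 : Q ≠ 0) :
    0 < ∑ α, ∑ β, ∑ μ, ∑ ν, Q α β * Q μ ν * (∏ γ, (({α, β, μ, ν} : Multiset ι).count γ)! : ℕ) := by
  obtain ⟨a, b, hab⟩ : ∃ a b, Q a b ≠ 0 := by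
    by_contra! h
    exact hQ0 (funext fun a => funext (h a))
  have hsq : ∀ a b, Q a b ^ 2 + Q a b * Q b a = 2 * Q a b ^ 2 := fun a b => by
    rw [hQ b a]
    ring
  have hfrob : 0 < ∑ a, ∑ b, (Q a b ^ 2 + Q a b * Q b a) := by
    simp only [hsq]
    refine sum_pos' (fun _ _ => by positivity) ⟨a, mem_univ a, ?_⟩
    exact sum_pos' (fun _ _ => by positivity) ⟨b, mem_univ b, by positivity⟩
  rw [sum_mul_prod_factorial_count_four]
  exact add_pos_of_pos_of_nonneg (add_pos_of_nonneg_of_pos (by positivity) hfrob) (by positivity)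

end

theorem simplexFourthMoment_eq (d : ℕ) (α β μ ν : Fin d) :
    simplexFourthMoment d α β μ ν = ((d - 1)! / (d + 3)! : ℝ) *
      (∏ γ, (({α, β, μ, ν} : Multiset (Fin d)).count γ)! : ℕ) := by
  rw [simplexFourthMoment]
  push_cast
  ring

theorem sum_mul_simplexFourthMoment_pos {d : ℕ} {Q : Fin d → Fin d → ℝ}
    (hQ : ∀ a b, Q a b = Q b a) (hQ0 : Q ≠ 0) :
    0 < ∑ α, ∑ β, ∑ μ, ∑ ν, Q α β * Q μ ν * simplexFourthMoment d α β μ ν := by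
  simp only [simplexFourthMoment_eq, mul_left_comm _ ((_ : ℝ) / _), ← mul_sum]
  exact mul_pos (by positivity) (sum_mul_prod_factorial_count_four_pos hQ hQ0)

theorem card_sym2_fin (d : ℕ) : Fintype.card (Sym2 (Fin d)) = d * (d + 1) / 2 := by
  rw [Sym2.card, Fintype.card_fin, choose_two_right, add_tsub_cancel_right, mul_comm]

theorem no_d_point_four_design_general (d N : ℕ) (hd : 2 ≤ d)
    (p : Fin N → Fin d → ℝ)
    (hmom : ∀ α β μ ν : Fin d,
      (1 / (N : ℝ)) * ∑ i : Fin N, p i α * p i β * p i μ * p i ν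
        = simplexFourthMoment d α β μ ν) :
    d * (d + 1) / 2 ≤ N ∧ d < d * (d + 1) / 2 := by
  refine ⟨?_, lt_of_succ_le ((le_div_iff_mul_le two_pos).mpr (by nlinarith))⟩
  · by_contra! hN
    obtain ⟨Q, hQ, hQ0, hvanish⟩ := exists_symm_ne_zero_forall_sum_mul_eq_zero p
      (by rwa [card_sym2_fin, Fintype.card_fin])
    have hzero : ∑ α, ∑ β, ∑ μ, ∑ ν, Q α β * Q μ ν * simplexFourthMoment d α β μ ν = 0 := by
      simp only [← hmom, mul_left_comm _ (1 / (N : ℝ)), ← mul_sum, sum_mul_sum_fourth_moment,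
        hvanish]
      simp
    exact (sum_mul_simplexFourthMoment_pos hQ hQ0).ne' hzero

/-- no `d`-point 4-design exists in the probability simplex `Δ_d`:
any `N` probability vectors whose fourth moments match those of the uniform
measure on `Δ_d` must satisfy `N ≥ d(d+1)/2 > d` (for `d ≥ 2`). -/
theorem no_d_point_four_design (d N : ℕ) (hd : 2 ≤ d) (hN : 0 < N)
    (p : Fin N → Fin d → ℝ)
    (hpos : ∀ i α, 0 ≤ p i α) (hsum : ∀ i, ∑ α, p i α = 1)
    (hmom : ∀ α β μ ν : Fin d,
      (1 / (N : ℝ)) * ∑ i : Fin N, p i α * p i β * p i μ * p i ν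
        = simplexFourthMoment d α β μ ν) :
    d * (d + 1) / 2 ≤ N ∧ d < d * (d + 1) / 2 :=
  no_d_point_four_design_general d N hd p hmom
end

section
/- Let {|ψ_α⟩}_{α=1}^{(k+1)d} be a complex projective t-design in C^d formed by the columns of the matrices I, U, U², …, U^k for a unitary U = VΛV† with Λ diagonal. Then the d probability vectors obtained by decohering the columns of V† in the computational basis, p^{(β)}_α = |⟨α|V†|β⟩|², form a t-design in the probability simplex Δ_d, i.e., their moments up to degree t agree with those of the flat Lebesgue measure on Δ_d. -/
open Matrix
open scoped ComplexConjugate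

/-- The `t`-fold tensor-power frame operator of a family of vectors in `ℂ^d`,
as a matrix on `(ℂ^d)^{⊗t}` (index set `Fin t → Fin d`). -/
noncomputable def frameOp (d t : ℕ) {ι : Type*} [Fintype ι] (ψ : ι → Fin d → ℂ) :
    Matrix (Fin t → Fin d) (Fin t → Fin d) ℂ :=
  fun x y => (1 / (Fintype.card ι : ℂ)) * ∑ i : ι,
    (∏ s : Fin t, ψ i (x s)) * conj (∏ s : Fin t, ψ i (y s))

/-- The orthogonal projection onto the symmetric subspace of `(ℂ^d)^{⊗t}`. -/
noncomputable def symProj (d t : ℕ) : Matrix (Fin t → Fin d) (Fin t → Fin d) ℂ :=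
  fun x y => (1 / (t.factorial : ℂ)) *
    ∑ σ : Equiv.Perm (Fin t), (if x = y ∘ σ then 1 else 0)

/-- Permutations preserving the fibers of `f` correspond to tuples of permutations
of the individual fibers. -/
def stabEquiv {α β : Type*} [DecidableEq β] (f : α → β) :
    {σ : Equiv.Perm α // f ∘ σ = f} ≃ ∀ b, Equiv.Perm {a // f a = b} where
  toFun σ b := Equiv.Perm.subtypePerm σ.1 (fun a => by
    rw [show f (σ.1 a) = f a from congrFun σ.2 a])
  invFun F := ⟨(Equiv.sigmaFiberEquiv f).permCongr (Equiv.sigmaCongrRight F),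
    funext fun a => ((F (f a)) ⟨a, rfl⟩).2⟩
  left_inv σ := Subtype.ext (Equiv.ext fun a => rfl)
  right_inv F := funext fun b => Equiv.ext fun a => Subtype.ext (by
    obtain ⟨a, ha⟩ := a; subst ha; rfl)

lemma card_stab {α β : Type*} [Fintype α] [DecidableEq α] [Fintype β] [DecidableEq β]
    (f : α → β) :
    Fintype.card {σ : Equiv.Perm α // f ∘ σ = f}
      = ∏ b, (Fintype.card {a // f a = b}).factorial := by
  rw [Fintype.card_congr (stabEquiv f), Fintype.card_pi]
  exact Finset.prod_congr rfl fun b _ => by rw [Fintype.card_perm]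

lemma sum_stab {n : ℕ} {β : Type*} [Fintype β] [DecidableEq β] (f : Fin n → β) :
    ∑ σ : Equiv.Perm (Fin n), (if f ∘ σ = f then (1:ℂ) else 0)
      = ∏ b, ((Fintype.card {a // f a = b}).factorial : ℂ) := by
  rw [Finset.sum_boole]
  rw [← Fintype.card_subtype, card_stab]
  push_cast
  ring

/-- A fiber of the first projection of a sigma type of `Fin`s. -/
def fiberEquiv {d : ℕ} (κ : Fin d → ℕ) (a : Fin d) :
    {p : (Σ α : Fin d, Fin (κ α)) // p.1 = a} ≃ Fin (κ a) where
  toFun p := Fin.cast (congrArg κ p.2) p.1.2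
  invFun i := ⟨⟨a, i⟩, rfl⟩
  left_inv p := by obtain ⟨⟨b, i⟩, hb⟩ := p; subst hb; rfl
  right_inv i := rfl

/-- Realize a composition `κ` of `t` as a function `Fin t → Fin d` with fiber sizes `κ`,
compatibly with products. -/
lemma prod_multiindex {d t : ℕ} (κ : Fin d → ℕ) (h : ∑ α, κ α = t) :
    ∃ x : Fin t → Fin d, (∀ a, Fintype.card {s // x s = a} = κ a) ∧
      ∀ f : Fin d → ℂ, ∏ s, f (x s) = ∏ a, f a ^ κ a := by
  have hcard : Fintype.card (Σ α : Fin d, Fin (κ α)) = t := by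
    simp [Fintype.card_sigma, h]
  let e := Fintype.equivFinOfCardEq hcard
  refine ⟨fun s => (e.symm s).1, fun a => ?_, fun f => ?_⟩
  · have e2 : {s // (e.symm s).1 = a} ≃ {p : (Σ α : Fin d, Fin (κ α)) // p.1 = a} :=
      e.symm.subtypeEquiv fun s => Iff.rfl
    rw [Fintype.card_congr (e2.trans (fiberEquiv κ a)), Fintype.card_fin]
  · calc ∏ s, f ((e.symm s).1) = ∏ p : (Σ α : Fin d, Fin (κ α)), f ((e.symm (e p)).1) :=
          (Equiv.prod_comp e fun s => f ((e.symm s).1)).symm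
      _ = ∏ p : (Σ α : Fin d, Fin (κ α)), f p.1 := by simp
      _ = ∏ a, ∏ _i : Fin (κ a), f a := by rw [← Finset.univ_sigma_univ, Finset.prod_sigma]
      _ = ∏ a, f a ^ κ a := by simp [Finset.prod_const]

lemma prod_pow_update {d : ℕ} (κ : Fin d → ℕ) (α' : Fin d) (q : Fin d → ℝ) :
    ∏ α, q α ^ (Function.update κ α' (κ α' + 1) α) = q α' * ∏ α, q α ^ κ α := by
  have h1 : ∀ α, q α ^ (Function.update κ α' (κ α' + 1) α)
      = Function.update (fun α => q α ^ κ α) α' (q α' ^ (κ α' + 1)) α := by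
    intro α
    by_cases h : α = α'
    · subst h; simp
    · simp [Function.update_apply, h]
  calc ∏ α, q α ^ (Function.update κ α' (κ α' + 1) α)
      = ∏ α, Function.update (fun α => q α ^ κ α) α' (q α' ^ (κ α' + 1)) α :=
        Finset.prod_congr rfl fun α _ => h1 α
    _ = q α' ^ (κ α' + 1) * ∏ α ∈ Finset.univ.erase α', q α ^ κ α := by
        rw [Finset.prod_update_of_mem (Finset.mem_univ α')]
        simp [Finset.sdiff_singleton_eq_erase]
    _ = q α' * ∏ α, q α ^ κ α := by
        rw [pow_succ, mul_comm (q α' ^ κ α') (q α'), mul_assoc,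
          Finset.mul_prod_erase Finset.univ (fun α => q α ^ κ α) (Finset.mem_univ α')]

lemma sum_update_succ {d : ℕ} (κ : Fin d → ℕ) (α' : Fin d) :
    ∑ α, Function.update κ α' (κ α' + 1) α = (∑ α, κ α) + 1 := by
  rw [Finset.sum_update_of_mem (Finset.mem_univ α')]
  have := Finset.add_sum_erase Finset.univ κ (Finset.mem_univ α')
  simp only [Finset.sdiff_singleton_eq_erase]
  omega

lemma prod_factorial_update {d : ℕ} (κ : Fin d → ℕ) (α' : Fin d) :
    ∏ α, (Function.update κ α' (κ α' + 1) α).factorial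
      = (κ α' + 1) * ∏ α, (κ α).factorial := by
  have h1 : ∀ α, (Function.update κ α' (κ α' + 1) α).factorial
      = Function.update (fun α => (κ α).factorial) α' ((κ α' + 1).factorial) α := by
    intro α
    by_cases h : α = α'
    · subst h; simp
    · simp [Function.update_apply, h]
  calc ∏ α, (Function.update κ α' (κ α' + 1) α).factorial
      = ∏ α, Function.update (fun α => (κ α).factorial) α' ((κ α' + 1).factorial) α :=
        Finset.prod_congr rfl fun α _ => h1 α
    _ = (κ α' + 1).factorial * ∏ α ∈ Finset.univ.erase α', (κ α).factorial := by
        rw [Finset.prod_update_of_mem (Finset.mem_univ α')]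
        simp [Finset.sdiff_singleton_eq_erase]
    _ = (κ α' + 1) * ∏ α, (κ α).factorial := by
        rw [Nat.factorial_succ, mul_assoc,
          Finset.mul_prod_erase Finset.univ (fun α => (κ α).factorial) (Finset.mem_univ α')]

lemma stepdown (d : ℕ) (hd : 1 ≤ d) (q : Fin d → Fin d → ℝ)
    (hq : ∀ β, ∑ α, q β α = 1) (κ : Fin d → ℕ)
    (ih : ∀ α', (1/(d:ℝ)) * ∑ β, ∏ α, q β α ^ (Function.update κ α' (κ α' + 1) α)
        = ((d - 1).factorial * ∏ α, (Function.update κ α' (κ α' + 1) α).factorial : ℝ)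
          / ((d - 1 + ∑ α, Function.update κ α' (κ α' + 1) α).factorial : ℝ)) :
    (1/(d:ℝ)) * ∑ β, ∏ α, q β α ^ κ α
      = ((d - 1).factorial * ∏ α, (κ α).factorial : ℝ)
          / ((d - 1 + ∑ α, κ α).factorial : ℝ) := by
  have hL : ∑ α' : Fin d, (1/(d:ℝ)) * ∑ β, ∏ α, q β α ^ (Function.update κ α' (κ α' + 1) α)
      = (1/(d:ℝ)) * ∑ β, ∏ α, q β α ^ κ α := by
    calc ∑ α' : Fin d, (1/(d:ℝ)) * ∑ β, ∏ α, q β α ^ (Function.update κ α' (κ α' + 1) α)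
        = ∑ α' : Fin d, (1/(d:ℝ)) * ∑ β, q β α' * ∏ α, q β α ^ κ α := by
          refine Finset.sum_congr rfl fun α' _ => ?_
          congr 1
          exact Finset.sum_congr rfl fun β _ => prod_pow_update κ α' (q β)
      _ = (1/(d:ℝ)) * ∑ β, (∑ α' : Fin d, q β α') * ∏ α, q β α ^ κ α := by
          rw [← Finset.mul_sum]
          congr 1
          rw [Finset.sum_comm]
          exact Finset.sum_congr rfl fun β _ => (Finset.sum_mul _ _ _).symm
      _ = (1/(d:ℝ)) * ∑ β, ∏ α, q β α ^ κ α := by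
          congr 1
          refine Finset.sum_congr rfl fun β _ => ?_
          rw [hq β, one_mul]
  have hR : ∑ α' : Fin d,
        ((d - 1).factorial * ∏ α, (Function.update κ α' (κ α' + 1) α).factorial : ℝ)
          / ((d - 1 + ∑ α, Function.update κ α' (κ α' + 1) α).factorial : ℝ)
      = ((d - 1).factorial * ∏ α, (κ α).factorial : ℝ)
          / ((d - 1 + ∑ α, κ α).factorial : ℝ) := by
    have hden : ∀ α' : Fin d, d - 1 + ∑ α, Function.update κ α' (κ α' + 1) α
        = (d - 1 + ∑ α, κ α) + 1 := by
      intro α'; rw [sum_update_succ]; omega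
    have hfac : ((d - 1 + ∑ α, κ α) + 1).factorial
        = ((d:ℕ) + ∑ α, κ α) * (d - 1 + ∑ α, κ α).factorial := by
      rw [Nat.factorial_succ]
      congr 1
      omega
    calc ∑ α' : Fin d,
          ((d - 1).factorial * ∏ α, (Function.update κ α' (κ α' + 1) α).factorial : ℝ)
            / ((d - 1 + ∑ α, Function.update κ α' (κ α' + 1) α).factorial : ℝ)
        = ∑ α' : Fin d, ((κ α' : ℝ) + 1) *
            (((d - 1).factorial * ∏ α, (κ α).factorial : ℝ)
              / ((((d:ℕ) + ∑ α, κ α) : ℝ) * ((d - 1 + ∑ α, κ α).factorial : ℝ))) := by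
          refine Finset.sum_congr rfl fun α' _ => ?_
          rw [hden α', hfac, prod_factorial_update]
          push_cast
          ring
      _ = (((∑ α, κ α : ℕ) : ℝ) + d) *
            (((d - 1).factorial * ∏ α, (κ α).factorial : ℝ)
              / ((((d:ℕ) + ∑ α, κ α) : ℝ) * ((d - 1 + ∑ α, κ α).factorial : ℝ))) := by
          rw [← Finset.sum_mul]
          congr 1
          push_cast
          rw [Finset.sum_add_distrib]
          simp
      _ = ((d - 1).factorial * ∏ α, (κ α).factorial : ℝ)
            / ((d - 1 + ∑ α, κ α).factorial : ℝ) := by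
          have h1 : (((d:ℕ) + ∑ α, κ α) : ℝ) ≠ 0 := by
            push_cast
            have hd' : (0:ℝ) < d := by exact_mod_cast hd
            have hk' : (0:ℝ) ≤ ∑ x : Fin d, (κ x : ℝ) :=
              Finset.sum_nonneg fun _ _ => by positivity
            linarith
          have h2 : ((d - 1 + ∑ α, κ α).factorial : ℝ) ≠ 0 := by
            exact_mod_cast (Nat.factorial_pos _).ne'
          field_simp
          push_cast
          ring
  calc (1/(d:ℝ)) * ∑ β, ∏ α, q β α ^ κ α
      = ∑ α' : Fin d, (1/(d:ℝ)) * ∑ β, ∏ α, q β α ^ (Function.update κ α' (κ α' + 1) α) :=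
        hL.symm
    _ = ∑ α' : Fin d,
          ((d - 1).factorial * ∏ α, (Function.update κ α' (κ α' + 1) α).factorial : ℝ)
            / ((d - 1 + ∑ α, Function.update κ α' (κ α' + 1) α).factorial : ℝ) :=
        Finset.sum_congr rfl fun α' _ => ih α'
    _ = _ := hR

set_option maxHeartbeats 2000000 in
/-- if the `(k+1)d` columns of `I, U, U², …, U^k` form a complex
projective `t`-design in `ℂ^d`, where `U = V Λ Vᴴ` with `V` unitary and `Λ`
diagonal, then the `d` probability vectors `p^{(β)}_α = |⟨α|Vᴴ|β⟩|²` obtained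
by decohering the columns of `Vᴴ` form a `t`-design in the probability simplex
`Δ_d`: their monomial averages of degree `≤ t` agree with
`⟨∏ p_α^{κ_α}⟩_{Δ_d} = (d−1)!·∏ κ_α! / (d−1+∑κ)!`. -/
theorem cyclic_design_decoheres_to_simplex_design (d k t : ℕ) (hd : 1 ≤ d) (ht : 1 ≤ t)
    (V : Matrix (Fin d) (Fin d) ℂ) (hV : V ∈ Matrix.unitaryGroup (Fin d) ℂ)
    (L : Fin d → ℂ) (hL : ∀ β, ‖L β‖ = 1)
    (U : Matrix (Fin d) (Fin d) ℂ) (hU : U = V * Matrix.diagonal L * Vᴴ)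
    (hdesign :
      frameOp d t (fun (p : Fin (k + 1) × Fin d) (α : Fin d) => (U ^ (p.1 : ℕ)) α p.2)
        = (1 / (Nat.choose (d + t - 1) t : ℂ)) • symProj d t) :
    ∀ κ : Fin d → ℕ, (∑ α, κ α) ≤ t →
      (1 / (d : ℝ)) * ∑ β : Fin d, ∏ α : Fin d, (‖Vᴴ α β‖ ^ 2) ^ (κ α)
        = ((d - 1).factorial * ∏ α : Fin d, (κ α).factorial : ℝ)
            / ((d - 1 + ∑ α, κ α).factorial : ℝ) := by
  -- basic unitarity facts
  have hVV : Vᴴ * V = 1 := by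
    have := hV.1
    simpa [Matrix.star_eq_conjTranspose] using this
  have hVVt : V * Vᴴ = 1 := by
    have := hV.2
    simpa [Matrix.star_eq_conjTranspose] using this
  have hrow : ∀ a a' : Fin d, (∑ γ, Vᴴ a γ * conj (Vᴴ a' γ)) = if a = a' then (1:ℂ) else 0 := by
    intro a a'
    have h1 := congrFun (congrFun hVV a) a'
    rw [Matrix.mul_apply] at h1
    calc ∑ γ, Vᴴ a γ * conj (Vᴴ a' γ) = ∑ γ, Vᴴ a γ * V γ a' := by
          refine Finset.sum_congr rfl fun γ _ => ?_
          simp [Matrix.conjTranspose_apply]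
      _ = if a = a' then 1 else 0 := by rw [h1, Matrix.one_apply]
  have hnorm : ∀ β : Fin d, ∑ α, ‖Vᴴ α β‖ ^ 2 = 1 := by
    intro β
    have h1 := congrFun (congrFun hVVt β) β
    rw [Matrix.mul_apply] at h1
    have h2 : ∑ α, ((‖Vᴴ α β‖ ^ 2 : ℝ) : ℂ) = 1 := by
      calc ∑ α, ((‖Vᴴ α β‖ ^ 2 : ℝ) : ℂ)
          = ∑ α, Vᴴ α β * conj (Vᴴ α β) := by
            refine Finset.sum_congr rfl fun α _ => ?_
            rw [Complex.mul_conj, Complex.sq_norm]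
        _ = ∑ α, V β α * Vᴴ α β := by
            refine Finset.sum_congr rfl fun α _ => ?_
            rw [Matrix.conjTranspose_apply]
            simp; ring
        _ = 1 := by rw [h1, Matrix.one_apply]; simp
    have h3 : ((∑ α, ‖Vᴴ α β‖ ^ 2 : ℝ) : ℂ) = ((1:ℝ) : ℂ) := by
      push_cast
      simpa using h2
    exact_mod_cast h3
  have hpow : ∀ i : ℕ, Vᴴ * U ^ i = Matrix.diagonal (fun α => L α ^ i) * Vᴴ := by
    intro i
    induction i with
    | zero => simp
    | succ i ih =>
        have hstep : Vᴴ * U = Matrix.diagonal L * Vᴴ := by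
          rw [hU, ← Matrix.mul_assoc, ← Matrix.mul_assoc, hVV, Matrix.one_mul]
        calc Vᴴ * U ^ (i+1) = (Vᴴ * U ^ i) * U := by rw [pow_succ, Matrix.mul_assoc]
          _ = Matrix.diagonal (fun α => L α ^ i) * (Vᴴ * U) := by rw [ih, Matrix.mul_assoc]
          _ = Matrix.diagonal (fun α => L α ^ i) * (Matrix.diagonal L * Vᴴ) := by rw [hstep]
          _ = Matrix.diagonal (fun α => L α ^ (i+1)) * Vᴴ := by
              rw [← Matrix.mul_assoc, Matrix.diagonal_mul_diagonal]
              simp [pow_succ]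
  have hWU : ∀ (i : ℕ) (a b : Fin d), (∑ γ, Vᴴ a γ * (U ^ i) γ b) = L a ^ i * Vᴴ a b := by
    intro i a b
    have h1 := congrFun (congrFun (hpow i) a) b
    rw [Matrix.mul_apply] at h1
    rw [h1, Matrix.diagonal_mul]
  -- base case: compositions of weight exactly t
  have base : ∀ κ : Fin d → ℕ, (∑ α, κ α) = t →
      (1 / (d : ℝ)) * ∑ β : Fin d, ∏ α : Fin d, (‖Vᴴ α β‖ ^ 2) ^ (κ α)
        = ((d - 1).factorial * ∏ α : Fin d, (κ α).factorial : ℝ)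
            / ((d - 1 + ∑ α, κ α).factorial : ℝ) := by
    intro κ hκt
    obtain ⟨x, hx, hprodx⟩ := prod_multiindex κ hκt
    -- the conjugated frame operator entry, computed two ways
    have e12 : (∑ x' : Fin t → Fin d, ∑ y' : Fin t → Fin d,
          (∏ s, Vᴴ (x s) (x' s)) * conj (∏ s, Vᴴ (x s) (y' s)) *
            frameOp d t (fun (p : Fin (k + 1) × Fin d) (α : Fin d) => (U ^ (p.1 : ℕ)) α p.2) x' y')
        = (∑ x' : Fin t → Fin d, ∑ y' : Fin t → Fin d,
          (∏ s, Vᴴ (x s) (x' s)) * conj (∏ s, Vᴴ (x s) (y' s)) *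
            ((1 / (Nat.choose (d + t - 1) t : ℂ)) • symProj d t) x' y') := by
      rw [hdesign]
    have e1 : (∑ x' : Fin t → Fin d, ∑ y' : Fin t → Fin d,
          (∏ s, Vᴴ (x s) (x' s)) * conj (∏ s, Vᴴ (x s) (y' s)) *
            frameOp d t (fun (p : Fin (k + 1) × Fin d) (α : Fin d) => (U ^ (p.1 : ℕ)) α p.2) x' y')
        = (1 / (d:ℂ)) * ∑ β, ∏ s, (Vᴴ (x s) β * conj (Vᴴ (x s) β)) := by
      set ψ : (Fin (k+1) × Fin d) → Fin d → ℂ := fun p α => (U ^ (p.1 : ℕ)) α p.2 with hψ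
      set B : (Fin t → Fin d) → ℂ := fun y => ∏ s, Vᴴ (x s) (y s) with hB
      set A : (Fin (k+1) × Fin d) → (Fin t → Fin d) → ℂ := fun p y => ∏ s, ψ p (y s) with hA
      set N : ℂ := (Fintype.card (Fin (k+1) × Fin d) : ℂ) with hN
      have hterm : ∀ p : Fin (k+1) × Fin d,
          (∑ x' : Fin t → Fin d, B x' * A p x') = ∏ s, (L (x s) ^ (p.1:ℕ) * Vᴴ (x s) p.2) := by
        intro p
        calc ∑ x' : Fin t → Fin d, B x' * A p x'
            = ∑ x' : Fin t → Fin d, ∏ s, (Vᴴ (x s) (x' s) * ψ p (x' s)) := by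
              refine Finset.sum_congr rfl fun x' _ => ?_
              rw [hB, hA, Finset.prod_mul_distrib]
          _ = ∏ s, ∑ γ, Vᴴ (x s) γ * ψ p γ :=
              (Fintype.prod_sum (κ := fun _ : Fin t => Fin d) (fun s γ => Vᴴ (x s) γ * ψ p γ)).symm
          _ = ∏ s, (L (x s) ^ (p.1:ℕ) * Vᴴ (x s) p.2) :=
              Finset.prod_congr rfl fun s _ => hWU _ _ _
      calc ∑ x' : Fin t → Fin d, ∑ y' : Fin t → Fin d, B x' * conj (B y') * frameOp d t ψ x' y'
          = ∑ x' : Fin t → Fin d, ∑ y' : Fin t → Fin d, (1/N) * ∑ p : Fin (k+1) × Fin d,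
              (B x' * A p x') * conj (B y' * A p y') := by
            refine Finset.sum_congr rfl fun x' _ => Finset.sum_congr rfl fun y' _ => ?_
            show B x' * conj (B y') * ((1/N) * ∑ p, A p x' * conj (A p y')) = _
            rw [Finset.mul_sum, Finset.mul_sum, Finset.mul_sum]
            refine Finset.sum_congr rfl fun p _ => ?_
            rw [_root_.map_mul]
            ring
        _ = (1/N) * ∑ x' : Fin t → Fin d, ∑ y' : Fin t → Fin d, ∑ p : Fin (k+1) × Fin d,
              (B x' * A p x') * conj (B y' * A p y') := by
            simp only [← Finset.mul_sum]
        _ = (1/N) * ∑ p : Fin (k+1) × Fin d, ∑ x' : Fin t → Fin d, ∑ y' : Fin t → Fin d,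
              (B x' * A p x') * conj (B y' * A p y') := by
            congr 1
            calc ∑ x' : Fin t → Fin d, ∑ y' : Fin t → Fin d, ∑ p : Fin (k+1) × Fin d,
                  (B x' * A p x') * conj (B y' * A p y')
                = ∑ x' : Fin t → Fin d, ∑ p : Fin (k+1) × Fin d, ∑ y' : Fin t → Fin d,
                  (B x' * A p x') * conj (B y' * A p y') :=
                  Finset.sum_congr rfl fun x' _ => Finset.sum_comm
              _ = ∑ p : Fin (k+1) × Fin d, ∑ x' : Fin t → Fin d, ∑ y' : Fin t → Fin d,
                  (B x' * A p x') * conj (B y' * A p y') := Finset.sum_comm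
        _ = (1/N) * ∑ p : Fin (k+1) × Fin d, (∑ x' : Fin t → Fin d, B x' * A p x') *
              conj (∑ y' : Fin t → Fin d, B y' * A p y') := by
            congr 1
            refine Finset.sum_congr rfl fun p _ => ?_
            rw [map_sum, Finset.sum_mul_sum]
        _ = (1/N) * ∑ p : Fin (k+1) × Fin d, ∏ s, (Vᴴ (x s) p.2 * conj (Vᴴ (x s) p.2)) := by
            congr 1
            refine Finset.sum_congr rfl fun p _ => ?_
            rw [hterm, map_prod, ← Finset.prod_mul_distrib]
            refine Finset.prod_congr rfl fun s _ => ?_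
            rw [_root_.map_mul]
            have hLL : L (x s) ^ (p.1:ℕ) * conj (L (x s) ^ (p.1:ℕ)) = 1 := by
              rw [Complex.mul_conj, ← Complex.sq_norm]
              simp [hL]
            calc L (x s) ^ (p.1:ℕ) * Vᴴ (x s) p.2 *
                  (conj (L (x s) ^ (p.1:ℕ)) * conj (Vᴴ (x s) p.2))
                = (L (x s) ^ (p.1:ℕ) * conj (L (x s) ^ (p.1:ℕ))) *
                  (Vᴴ (x s) p.2 * conj (Vᴴ (x s) p.2)) := by ring
              _ = Vᴴ (x s) p.2 * conj (Vᴴ (x s) p.2) := by rw [hLL, one_mul]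
        _ = (1 / (d:ℂ)) * ∑ β, ∏ s, (Vᴴ (x s) β * conj (Vᴴ (x s) β)) := by
            rw [Fintype.sum_prod_type]
            simp only [Finset.sum_const, Finset.card_univ, Fintype.card_fin, nsmul_eq_mul]
            rw [hN]
            have hk : ((k:ℂ)+1) ≠ 0 := by
              have : ((k+1 : ℕ) : ℂ) ≠ 0 := Nat.cast_ne_zero.mpr (Nat.succ_ne_zero k)
              push_cast at this
              exact this
            have hdd : (d:ℂ) ≠ 0 := Nat.cast_ne_zero.mpr (by omega)
            simp only [Fintype.card_prod, Fintype.card_fin]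
            push_cast
            field_simp
    have e2 : (∑ x' : Fin t → Fin d, ∑ y' : Fin t → Fin d,
          (∏ s, Vᴴ (x s) (x' s)) * conj (∏ s, Vᴴ (x s) (y' s)) *
            ((1 / (Nat.choose (d + t - 1) t : ℂ)) • symProj d t) x' y')
        = (1 / (Nat.choose (d + t - 1) t : ℂ)) * (1 / (t.factorial : ℂ)) *
            ∑ σ : Equiv.Perm (Fin t), (if x ∘ σ = x then (1:ℂ) else 0) := by
      set c : ℂ := (1 / (Nat.choose (d + t - 1) t : ℂ)) with hc
      set B : (Fin t → Fin d) → ℂ := fun y => ∏ s, Vᴴ (x s) (y s) with hB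
      calc ∑ x' : Fin t → Fin d, ∑ y' : Fin t → Fin d, B x' * conj (B y') * (c • symProj d t) x' y'
          = ∑ x' : Fin t → Fin d, ∑ y' : Fin t → Fin d, ∑ σ : Equiv.Perm (Fin t),
              (c * (1 / (t.factorial : ℂ))) * (if x' = y' ∘ σ then B x' * conj (B y') else 0) := by
            refine Finset.sum_congr rfl fun x' _ => Finset.sum_congr rfl fun y' _ => ?_
            show B x' * conj (B y') * (c * ((1 / (t.factorial : ℂ)) * ∑ σ : Equiv.Perm (Fin t),
              (if x' = y' ∘ σ then 1 else 0))) = _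
            rw [Finset.mul_sum, Finset.mul_sum, Finset.mul_sum]
            refine Finset.sum_congr rfl fun σ _ => ?_
            by_cases h : x' = y' ∘ σ <;> simp [h] <;> ring
        _ = (c * (1 / (t.factorial : ℂ))) * ∑ σ : Equiv.Perm (Fin t), ∑ y' : Fin t → Fin d,
              ∑ x' : Fin t → Fin d, (if x' = y' ∘ σ then B x' * conj (B y') else 0) := by
            simp only [← Finset.mul_sum]
            congr 1
            calc ∑ x' : Fin t → Fin d, ∑ y' : Fin t → Fin d, ∑ σ : Equiv.Perm (Fin t),
                  (if x' = y' ∘ σ then B x' * conj (B y') else 0)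
                = ∑ y' : Fin t → Fin d, ∑ x' : Fin t → Fin d, ∑ σ : Equiv.Perm (Fin t),
                  (if x' = y' ∘ σ then B x' * conj (B y') else 0) := Finset.sum_comm
              _ = ∑ y' : Fin t → Fin d, ∑ σ : Equiv.Perm (Fin t), ∑ x' : Fin t → Fin d,
                  (if x' = y' ∘ σ then B x' * conj (B y') else 0) :=
                  Finset.sum_congr rfl fun y' _ => Finset.sum_comm
              _ = ∑ σ : Equiv.Perm (Fin t), ∑ y' : Fin t → Fin d, ∑ x' : Fin t → Fin d,
                  (if x' = y' ∘ σ then B x' * conj (B y') else 0) := Finset.sum_comm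
        _ = (c * (1 / (t.factorial : ℂ))) * ∑ σ : Equiv.Perm (Fin t), ∑ y' : Fin t → Fin d,
              B (y' ∘ σ) * conj (B y') := by
            congr 1
            refine Finset.sum_congr rfl fun σ _ => Finset.sum_congr rfl fun y' _ => ?_
            rw [Finset.sum_ite_eq' Finset.univ (y' ∘ σ) (fun x' => B x' * conj (B y'))]
            simp
        _ = (c * (1 / (t.factorial : ℂ))) * ∑ σ : Equiv.Perm (Fin t),
              (if x ∘ ⇑σ⁻¹ = x then (1:ℂ) else 0) := by
            congr 1
            refine Finset.sum_congr rfl fun σ _ => ?_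
            have hBσ : ∀ y' : Fin t → Fin d, B (y' ∘ σ) = ∏ s, Vᴴ (x (σ⁻¹ s)) (y' s) := by
              intro y'
              have h := Equiv.prod_comp σ (fun s => Vᴴ (x (σ⁻¹ s)) (y' s))
              simp only [Equiv.Perm.coe_inv, Equiv.symm_apply_apply] at h
              rw [hB]
              exact h
            calc ∑ y' : Fin t → Fin d, B (y' ∘ σ) * conj (B y')
                = ∑ y' : Fin t → Fin d, ∏ s, (Vᴴ (x (σ⁻¹ s)) (y' s) * conj (Vᴴ (x s) (y' s))) := by
                  refine Finset.sum_congr rfl fun y' _ => ?_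
                  rw [hBσ, hB, map_prod, ← Finset.prod_mul_distrib]
              _ = ∏ s, ∑ γ, (Vᴴ (x (σ⁻¹ s)) γ * conj (Vᴴ (x s) γ)) :=
                  (Fintype.prod_sum (κ := fun _ : Fin t => Fin d)
                    (fun s γ => Vᴴ (x (σ⁻¹ s)) γ * conj (Vᴴ (x s) γ))).symm
              _ = ∏ s, (if x (σ⁻¹ s) = x s then (1:ℂ) else 0) :=
                  Finset.prod_congr rfl fun s _ => hrow _ _
              _ = if x ∘ ⇑σ⁻¹ = x then (1:ℂ) else 0 := by
                  simp [Finset.prod_boole, funext_iff]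
        _ = c * (1 / (t.factorial : ℂ)) *
              ∑ σ : Equiv.Perm (Fin t), (if x ∘ σ = x then (1:ℂ) else 0) := by
            congr 1
            exact Fintype.sum_equiv (Equiv.inv (Equiv.Perm (Fin t))) _ _ (fun σ => rfl)
    have hstab : ∑ σ : Equiv.Perm (Fin t), (if x ∘ σ = x then (1:ℂ) else 0)
        = ∏ a, (((κ a).factorial : ℕ) : ℂ) := by
      rw [sum_stab x]
      exact Finset.prod_congr rfl fun a _ => by rw [hx a]
    have key : (1 / (d:ℂ)) * ∑ β, ∏ s, (Vᴴ (x s) β * conj (Vᴴ (x s) β))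
        = (1 / (Nat.choose (d + t - 1) t : ℂ)) *
            ((1 / (t.factorial : ℂ)) * ∏ a, (((κ a).factorial : ℕ) : ℂ)) := by
      rw [← mul_assoc, ← hstab]
      exact e1.symm.trans (e12.trans e2)
    have key2 : (1 / (d:ℂ)) * ∑ β, ∏ a, (((‖Vᴴ a β‖ ^ 2 : ℝ)) : ℂ) ^ (κ a)
        = (1 / (Nat.choose (d + t - 1) t : ℂ)) *
            ((1 / (t.factorial : ℂ)) * ∏ a, (((κ a).factorial : ℕ) : ℂ)) := by
      rw [← key]
      congr 1
      refine Finset.sum_congr rfl fun β _ => ?_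
      rw [hprodx (fun a => Vᴴ a β * conj (Vᴴ a β))]
      refine Finset.prod_congr rfl fun a _ => ?_
      rw [Complex.mul_conj, Complex.sq_norm]
    have keyR : (1 / (d:ℝ)) * ∑ β, ∏ a, (‖Vᴴ a β‖ ^ 2) ^ (κ a)
        = (1 / ((Nat.choose (d + t - 1) t : ℕ) : ℝ)) *
            ((1 / ((t.factorial : ℕ) : ℝ)) * ∏ a, (((κ a).factorial : ℕ) : ℝ)) := by
      have h := key2
      apply Complex.ofReal_injective
      push_cast at h ⊢
      exact h
    rw [keyR, hκt]
    have hle : t ≤ d + t - 1 := by omega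
    have hnat : (d + t - 1).choose t * t.factorial * (d - 1).factorial
        = (d + t - 1).factorial := by
      have h0 := Nat.choose_mul_factorial_mul_factorial hle
      rw [show d + t - 1 - t = d - 1 by omega] at h0
      exact h0
    have hd1t : d - 1 + t = d + t - 1 := by omega
    rw [hd1t]
    have hC : ((d + t - 1).choose t : ℝ) ≠ 0 := by
      exact_mod_cast (Nat.choose_pos hle).ne'
    have htf : ((t.factorial : ℕ) : ℝ) ≠ 0 := by
      exact_mod_cast (Nat.factorial_pos t).ne'
    have hdf : (((d-1).factorial : ℕ) : ℝ) ≠ 0 := by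
      exact_mod_cast (Nat.factorial_pos (d-1)).ne'
    have hfacR : ((d + t - 1).choose t : ℝ) * ((t.factorial : ℕ) : ℝ) * (((d-1).factorial : ℕ) : ℝ)
        = (((d + t - 1).factorial : ℕ) : ℝ) := by
      exact_mod_cast congrArg (Nat.cast : ℕ → ℝ) hnat
    rw [eq_div_iff (by exact_mod_cast (Nat.factorial_pos (d + t - 1)).ne')]
    rw [← hfacR]
    push_cast
    field_simp
  -- step-down induction to weights ≤ t
  have main : ∀ n : ℕ, ∀ κ : Fin d → ℕ, (∑ α, κ α) + n = t →
      (1 / (d : ℝ)) * ∑ β : Fin d, ∏ α : Fin d, (‖Vᴴ α β‖ ^ 2) ^ (κ α)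
        = ((d - 1).factorial * ∏ α : Fin d, (κ α).factorial : ℝ)
            / ((d - 1 + ∑ α, κ α).factorial : ℝ) := by
    intro n
    induction n with
    | zero => intro κ hκ; exact base κ (by omega)
    | succ n ih =>
        intro κ hκ
        exact stepdown d hd (fun β α => ‖Vᴴ α β‖ ^ 2) hnorm κ
          (fun α' => ih _ (by rw [sum_update_succ]; omega))
  intro κ hκle
  exact main (t - ∑ α, κ α) κ (by omega)
end
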